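/- arXiv:math/0304054 — 4 statements merged into one kernel-verified Lean document; each statement's English description precedes it below -/
import Mathlib

section
/- Let p be a probability vector whose components are pairwise distinct, and let X = (X, 𝓑, μ, T) be a tvwB p-endomorphism. Then the canonical factor map φ : X → B⁺(p), defined by φ(x)_k = j whenever p_X(T^k x) = p_j, is an isomorphism. -/
open MeasureTheory Filter
open scoped ENNReal symmDiff Classical

noncomputable section

/-- A probability vector: positive components summing to `1`. -/
def IsProbVec {s : ℕ} (p : Fin s → ℝ) : Prop :=
  (∀ j, 0 < p j) ∧ ∑ j, p j = 1

/-- The entropy `h(p) = ∑ⱼ -pⱼ log pⱼ` of a probability vector. -/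
def vecEntropy {s : ℕ} (p : Fin s → ℝ) : ℝ := ∑ j, Real.negMulLog (p j)

/-- Nodes of the `p`-tree are finite sequences from `{1,…,s}`; the weight of a node
`v = (a₁,…,aⱼ)` is `w_v = ∏ᵢ p_{aᵢ}`. -/
def nodeWeight {s : ℕ} (p : Fin s → ℝ) (v : List (Fin s)) : ℝ := (v.map p).prod

/-- A (structure- and weight-preserving) automorphism of the `p`-tree.  Here `σ = List.tail`
deletes the leftmost symbol of a node. -/
structure TreeAut {s : ℕ} (p : Fin s → ℝ) where
  toFun : List (Fin s) → List (Fin s)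
  bijective : Function.Bijective toFun
  length_eq : ∀ v, (toFun v).length = v.length
  tail_comm : ∀ v : List (Fin s), v ≠ [] → toFun v.tail = (toFun v).tail
  weight_eq : ∀ v, nodeWeight p (toFun v) = nodeWeight p v

/-- The `t̄_n` distance between two tree names:
`t̄_n(τ,τ') = (1/n) inf_A ∑_{0<|v|≤n} d(τ(v), τ'(Av)) w_v`. -/
def tbar {s : ℕ} (p : Fin s → ℝ) {R : Type*} [PseudoMetricSpace R]
    (n : ℕ) (τ τ' : List (Fin s) → R) : ℝ :=
  ⨅ A : TreeAut p, (1 / (n : ℝ)) *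
    ∑ m ∈ Finset.range n, ∑ a : Fin (m + 1) → Fin s,
      dist (τ (List.ofFn a)) (τ' (A.toFun (List.ofFn a))) * nodeWeight p (List.ofFn a)

/-- A tree partition together with its partial inverses, witnessing that `T` is `s`-to-1 a.e.
with the conditional probabilities of the `s` preimages of a.e. point given by the
components of `p`: the preimage `inv j x` of `x` carries conditional probability `p j`,
which is expressed by the disintegration `μ = ∑ⱼ pⱼ • (inv j)_* μ`. -/
structure TreeSystem {s : ℕ} (p : Fin s → ℝ) {X : Type*} [MeasurableSpace X]
    (μ : Measure X) (T : X → X) where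
  inv : Fin s → X → X
  measurable_inv : ∀ j, Measurable (inv j)
  left_inv : ∀ j, ∀ᵐ x ∂μ, T (inv j x) = x
  inv_ne : ∀ j k, j ≠ k → ∀ᵐ x ∂μ, inv j x ≠ inv k x
  surj : ∀ᵐ y ∂μ, ∃ j, inv j (T y) = y
  decomp : μ = ∑ j, ENNReal.ofReal (p j) • Measure.map (inv j) μ

/-- The partial inverse `T_v` along a node `v = (a₁,…,aₙ)`:
`T_v x = T_{a₁}(T_{a₂}(⋯ T_{aₙ} x))`. -/
def TreeSystem.invNode {s : ℕ} {p : Fin s → ℝ} {X : Type*} [MeasurableSpace X]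
    {μ : Measure X} {T : X → X} (K : TreeSystem p μ T)
    (v : List (Fin s)) (x : X) : X :=
  v.foldr (fun a y => K.inv a y) x

/-- The `g`-tree name of `x`: `τ^g_x(v) = g (T_v x)`. -/
def TreeSystem.treeName {s : ℕ} {p : Fin s → ℝ} {X : Type*} [MeasurableSpace X]
    {μ : Measure X} {T : X → X} (K : TreeSystem p μ T) {R : Type*}
    (g : X → R) (x : X) : List (Fin s) → R :=
  fun v => g (K.invNode v x)

/-- `(X, g)` is tree very weak Bernoulli. -/
def TvwBFor {s : ℕ} {p : Fin s → ℝ} {X : Type*} [MeasurableSpace X]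
    {μ : Measure X} {T : X → X} (K : TreeSystem p μ T)
    {R : Type*} [PseudoMetricSpace R] (g : X → R) : Prop :=
  ∀ ε : ℝ, 0 < ε → ∃ N : ℕ, ∀ n, N ≤ n → ∃ G : Set X, MeasurableSet G ∧
    ENNReal.ofReal (1 - ε) ≤ μ G ∧
    ∀ x ∈ G, ∀ y ∈ G, tbar p n (K.treeName g x) (K.treeName g y) < ε

/-- `X` is tree very weak Bernoulli: `(X, g)` is tvwB for every measurable function `g`
into a compact metric space (for any choice of tree partition; the condition does not
depend on this choice). -/
def TvwB {s : ℕ} (p : Fin s → ℝ) {X : Type*} [MeasurableSpace X]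
    (μ : Measure X) (T : X → X) : Prop :=
  ∀ K : TreeSystem p μ T,
    ∀ (R : Type) [MetricSpace R] [CompactSpace R] [MeasurableSpace R] [BorelSpace R]
      (g : X → R), Measurable g → TvwBFor K g

/-- Shannon entropy (natural log) of a finite partition `P`. -/
def partitionEntropy {X : Type*} [MeasurableSpace X] (μ : Measure X)
    {C : Type*} [Fintype C] (P : X → C) : ℝ :=
  ∑ c : C, Real.negMulLog ((μ (P ⁻¹' {c})).toReal)

/-- Kolmogorov–Sinai entropy of `(X, μ, T)`:
`sup_P lim (1/n) H(⋁_{i<n} T⁻ⁱ P)` over finite measurable partitions `P`. -/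
def ksEntropy {X : Type*} [MeasurableSpace X] (μ : Measure X) (T : X → X) : ℝ≥0∞ :=
  ⨆ (k : ℕ) (P : {P : X → Fin k // Measurable P}),
    ENNReal.ofReal (Filter.atTop.liminf fun n : ℕ =>
      partitionEntropy μ (fun x => fun i : Fin n => P.1 (T^[(i : ℕ)] x)) / n)

/-- `(X, 𝓑, μ, T)` is a `p`-endomorphism: `T` is a measure-preserving endomorphism which is
`s`-to-1 a.e. with preimage conditional probabilities the components of `p` (witnessed by a
tree partition with partial inverses), and the entropy of the system is `h(p)`. -/
def IsPEndo {s : ℕ} (p : Fin s → ℝ) {X : Type*} [MeasurableSpace X]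
    (μ : Measure X) (T : X → X) : Prop :=
  Measurable T ∧ MeasurePreserving T μ μ ∧ Nonempty (TreeSystem p μ T) ∧
    ksEntropy μ T = ENNReal.ofReal (vecEntropy p)

/-- The one-sided shift. -/
def shiftMap {α : Type*} : (ℕ → α) → ℕ → α := fun x n => x (n + 1)

lemma measurable_shiftMap {α : Type*} [MeasurableSpace α] :
    Measurable (shiftMap (α := α)) :=
  measurable_pi_lambda _ fun n => measurable_pi_apply (n + 1)

/-- `ν` is the Bernoulli product measure on `{1,…,s}ᴺ` giving symbol `j` weight `p j`. -/
def IsBernoulli {s : ℕ} (p : Fin s → ℝ) (ν : Measure (ℕ → Fin s)) : Prop :=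
  ∀ (n : ℕ) (a : Fin n → Fin s),
    ν {x | ∀ i : Fin n, x (i : ℕ) = a i} = ∏ i, ENNReal.ofReal (p (a i))

/-- `φ` realizes a (measure-theoretic) isomorphism from `(X, μ, T)` to `(Y, ν, S)`:
after deleting null sets `X₀, Y₀`, `φ` is a measure-preserving bijection
intertwining the transformations. -/
def IsIsoMod0Via {X Y : Type*} [MeasurableSpace X] [MeasurableSpace Y]
    (μ : Measure X) (T : X → X) (ν : Measure Y) (S : Y → Y) (φ : X → Y) : Prop :=
  Measurable φ ∧ Measure.map φ μ = ν ∧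
  ∃ (X₀ : Set X) (Y₀ : Set Y), MeasurableSet X₀ ∧ MeasurableSet Y₀ ∧
    μ X₀ = 0 ∧ ν Y₀ = 0 ∧ Set.BijOn φ X₀ᶜ Y₀ᶜ ∧
    ∀ x ∈ (X₀ᶜ : Set X), φ (T x) = S (φ x)

/-- `(X, μ, T)` and `(Y, ν, S)` are isomorphic measure-preserving systems. -/
def IsIsoMod0 {X Y : Type*} [MeasurableSpace X] [MeasurableSpace Y]
    (μ : Measure X) (T : X → X) (ν : Measure Y) (S : Y → Y) : Prop :=
  ∃ φ : X → Y, IsIsoMod0Via μ T ν S φ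

/-- The `p`-function `p_X` of a `p`-endomorphism: `p_X x` is the conditional probability of
the preimage `x` of `T x`, i.e. `p j` for the (a.e.-unique) `j` with `inv j (T x) = x`. -/
def pFun {s : ℕ} (p : Fin s → ℝ) {X : Type*} [MeasurableSpace X]
    {μ : Measure X} {T : X → X} (K : TreeSystem p μ T) (x : X) : ℝ :=
  ∑ j, if K.inv j (T x) = x then p j else 0

/-- `φ : X → Y` is a tree-adapted factor map: a factor map which, for a.e. `x`, maps the
`T`-preimages of `x` bijectively onto the `S`-preimages of `φ x`. -/
def IsTreeAdaptedFactor {X Y : Type*} [MeasurableSpace X] [MeasurableSpace Y]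
    (μ : Measure X) (T : X → X) (ν : Measure Y) (S : Y → Y) (φ : X → Y) : Prop :=
  Measurable φ ∧ Measure.map φ μ = ν ∧ (∀ᵐ x ∂μ, φ (T x) = S (φ x)) ∧
  (∀ᵐ x ∂μ, Set.BijOn φ (T ⁻¹' {x}) (S ⁻¹' {φ x}))

/-- `f` is a generating function for `(X, μ, T)`: `𝓑 = ⋁ᵢ T⁻ⁱ f⁻¹(𝓓)` modulo `μ`-null sets. -/
def Generating {X R : Type*} [MeasurableSpace X] [MeasurableSpace R]
    (μ : Measure X) (T : X → X) (f : X → R) : Prop :=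
  ∀ A : Set X, MeasurableSet A → ∃ A' : Set X,
    MeasurableSet[⨆ i : ℕ, MeasurableSpace.comap (fun x => f (T^[i] x)) inferInstance] A' ∧
    μ (A ∆ A') = 0

/-- A function is tree-adapted if for a.e. `x` it assigns distinct values to the
preimages of `x`. -/
def TreeAdaptedFn {X R : Type*} [MeasurableSpace X] (μ : Measure X) (T : X → X)
    (f : X → R) : Prop :=
  ∀ᵐ x ∂μ, Set.InjOn f (T ⁻¹' {x})

/-- The discretization `g_N`: the midpoint of the dyadic interval of length `2⁻ᴺ`
containing `r`. -/
def dyadicMid (N : ℕ) (r : ℝ) : ℝ :=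
  (2 * (⌊(2 ^ N : ℝ) * r⌋ : ℝ) + 1) / 2 ^ (N + 1)

/-- (Indices of) the nonempty nodes of the `p`-tree of length `≤ N`. -/
def NodeIdx (s N : ℕ) : Type := Σ m : Fin N, Fin (m + 1) → Fin s

/-- The node corresponding to a node index. -/
def NodeIdx.toList {s N : ℕ} (v : NodeIdx s N) : List (Fin s) := List.ofFn v.2

/-- The `g`-`N`-tree name of `x`, as a function on the nonempty nodes of length `≤ N`. -/
def levelName {s : ℕ} {p : Fin s → ℝ} {X : Type*} [MeasurableSpace X]
    {μ : Measure X} {T : X → X} (K : TreeSystem p μ T) {R : Type*} (g : X → R)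
    (N : ℕ) (x : X) : NodeIdx s N → R :=
  fun v => g (K.invNode v.toList x)

/-- Two `N`-tree names are the same up to tree automorphism. -/
def NameRel {s : ℕ} (p : Fin s → ℝ) (N : ℕ) {R : Type*}
    (τ τ' : NodeIdx s N → R) : Prop :=
  ∃ A : TreeAut p, ∀ v w : NodeIdx s N, w.toList = A.toFun v.toList → τ v = τ' w

/-- Total variation distance between the distributions of the (`N`-level, mod tree
automorphism) tree names of the two processes. -/
def nameDistTV {s : ℕ} (p : Fin s → ℝ) (N : ℕ) {R : Type*}
    {X Y : Type*} [MeasurableSpace X] [MeasurableSpace Y]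
    (μ : Measure X) (ν : Measure Y)
    (F : X → NodeIdx s N → R) (G : Y → NodeIdx s N → R) : ℝ :=
  ∑ᶠ q : Quot (NameRel p N (R := R)),
    |(μ {x | Quot.mk (NameRel p N) (F x) = q}).toReal -
     (ν {y | Quot.mk (NameRel p N) (G y) = q}).toReal|

namespace Aux
variable {s : ℕ} {p : Fin s → ℝ}

lemma nodeWeight_nil : nodeWeight p [] = 1 := rfl

lemma nodeWeight_cons (a : Fin s) (v : List (Fin s)) :
    nodeWeight p (a :: v) = p a * nodeWeight p v := by
  simp [nodeWeight]

lemma nodeWeight_pos (hp : ∀ j, 0 < p j) (v : List (Fin s)) : 0 < nodeWeight p v := by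
  refine List.prod_pos ?_
  intro a ha
  rcases List.mem_map.1 ha with ⟨j, _, rfl⟩
  exact hp j

def idAut (p : Fin s → ℝ) : TreeAut p :=
  ⟨id, Function.bijective_id, fun _ => rfl, fun _ _ => rfl, fun _ => rfl⟩

instance : Nonempty (TreeAut p) := ⟨idAut p⟩

lemma treeAut_eq_id (hp : ∀ j, 0 < p j) (hinj : Function.Injective p)
    (A : TreeAut p) : ∀ v, A.toFun v = v := by
  intro v
  induction v with
  | nil =>
    have h := A.length_eq []
    simpa using List.length_eq_zero_iff.1 h
  | cons a v ih =>
    have hlen : (A.toFun (a :: v)).length = v.length + 1 := by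
      simpa using A.length_eq (a :: v)
    obtain ⟨b, t, hbt⟩ : ∃ b t, A.toFun (a :: v) = b :: t := by
      cases h : A.toFun (a :: v) with
      | nil => rw [h] at hlen; simp at hlen
      | cons b t => exact ⟨b, t, rfl⟩
    have htail : t = v := by
      have h := A.tail_comm (a :: v) (by simp)
      rw [hbt] at h
      simpa [ih] using h.symm
    have hw := A.weight_eq (a :: v)
    rw [hbt, htail, nodeWeight_cons, nodeWeight_cons] at hw
    have hba : p b = p a := mul_right_cancel₀ (ne_of_gt (nodeWeight_pos hp v)) hw
    rw [hbt, htail, hinj hba]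

lemma tbar_eq (hp : ∀ j, 0 < p j) (hinj : Function.Injective p)
    {R : Type*} [PseudoMetricSpace R] (n : ℕ) (τ τ' : List (Fin s) → R) :
    tbar p n τ τ' = (1 / (n : ℝ)) *
      ∑ m ∈ Finset.range n, ∑ a : Fin (m + 1) → Fin s,
        dist (τ (List.ofFn a)) (τ' (List.ofFn a)) * nodeWeight p (List.ofFn a) := by
  have h : ∀ A : TreeAut p, (1 / (n : ℝ)) *
      ∑ m ∈ Finset.range n, ∑ a : Fin (m + 1) → Fin s,
        dist (τ (List.ofFn a)) (τ' (A.toFun (List.ofFn a))) * nodeWeight p (List.ofFn a)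
      = (1 / (n : ℝ)) *
      ∑ m ∈ Finset.range n, ∑ a : Fin (m + 1) → Fin s,
        dist (τ (List.ofFn a)) (τ' (List.ofFn a)) * nodeWeight p (List.ofFn a) := by
    intro A
    simp only [treeAut_eq_id hp hinj A]
  rw [tbar]
  simp only [h]
  exact ciInf_const

end Aux
namespace Aux
open MeasureTheory Filter
variable {s : ℕ} {p : Fin s → ℝ} {X : Type} [MeasurableSpace X]
  {μ : Measure X} {T : X → X}

lemma invNode_nil (K : TreeSystem p μ T) (x : X) : K.invNode [] x = x := rfl

lemma invNode_cons (K : TreeSystem p μ T) (a : Fin s) (v : List (Fin s)) (x : X) :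
    K.invNode (a :: v) x = K.inv a (K.invNode v x) := rfl

lemma measurable_invNode (K : TreeSystem p μ T) (v : List (Fin s)) :
    Measurable (K.invNode v) := by
  induction v with
  | nil => exact measurable_id
  | cons a v ih => exact (K.measurable_inv a).comp ih

lemma map_inv_ac (hp : ∀ j, 0 < p j) (K : TreeSystem p μ T) (j : Fin s) :
    Measure.map (K.inv j) μ ≪ μ := by
  refine Measure.AbsolutelyContinuous.mk (fun A hA h0 => ?_)
  have hdec : μ A = ∑ i, ENNReal.ofReal (p i) * Measure.map (K.inv i) μ A := by
    conv_lhs => rw [K.decomp]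
    simp [Measure.coe_finset_sum, Finset.sum_apply, Measure.smul_apply]
  rw [h0] at hdec
  have hall := (Finset.sum_eq_zero_iff.1 hdec.symm) j (Finset.mem_univ j)
  have hne : ENNReal.ofReal (p j) ≠ 0 := by
    simp [ENNReal.ofReal_eq_zero, not_le, hp j]
  exact (mul_eq_zero.1 hall).resolve_left hne

lemma qmp_inv (hp : ∀ j, 0 < p j) (K : TreeSystem p μ T) (j : Fin s) :
    Measure.QuasiMeasurePreserving (K.inv j) μ μ :=
  ⟨K.measurable_inv j, map_inv_ac hp K j⟩

lemma qmp_invNode (hp : ∀ j, 0 < p j) (K : TreeSystem p μ T) (v : List (Fin s)) :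
    Measure.QuasiMeasurePreserving (K.invNode v) μ μ := by
  induction v with
  | nil => exact Measure.QuasiMeasurePreserving.id μ
  | cons a v ih => exact Measure.QuasiMeasurePreserving.comp (qmp_inv hp K a) ih

lemma uniq_ae (K : TreeSystem p μ T) :
    ∀ᵐ x ∂μ, ∀ j k : Fin s, K.inv j x = K.inv k x → j = k := by
  rw [ae_all_iff]
  intro j
  rw [ae_all_iff]
  intro k
  by_cases hjk : j = k
  · exact Filter.Eventually.of_forall (fun x _ => hjk)
  · filter_upwards [K.inv_ne j k hjk] with x hx h
    exact absurd h hx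

/-- one-step lintegral decomposition -/
lemma lint_decomp (K : TreeSystem p μ T) {F : X → ℝ≥0∞} (hF : Measurable F) :
    ∫⁻ x, F x ∂μ = ∑ j, ENNReal.ofReal (p j) * ∫⁻ x, F (K.inv j x) ∂μ := by
  conv_lhs => rw [K.decomp]
  rw [MeasureTheory.lintegral_finset_sum_measure]
  refine Finset.sum_congr rfl (fun j _ => ?_)
  rw [MeasureTheory.lintegral_smul_measure, MeasureTheory.lintegral_map hF (K.measurable_inv j), smul_eq_mul]

end Aux
namespace Aux
open MeasureTheory Filter
open scoped ENNReal
variable {s : ℕ} {p : Fin s → ℝ} {X : Type} [MeasurableSpace X]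
  {μ : Measure X} {T : X → X}

lemma lint_decomp_node (hp : ∀ j, 0 < p j) (K : TreeSystem p μ T) :
    ∀ (m : ℕ) {F : X → ℝ≥0∞}, Measurable F →
    ∫⁻ x, F x ∂μ = ∑ a : Fin m → Fin s,
      ENNReal.ofReal (nodeWeight p (List.ofFn a)) * ∫⁻ x, F (K.invNode (List.ofFn a) x) ∂μ := by
  intro m
  induction m with
  | zero =>
    intro F hF
    rw [Fintype.sum_unique]
    simp [List.ofFn_zero, nodeWeight_nil, invNode_nil]
  | succ m ih =>
    intro F hF
    rw [lint_decomp K hF]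
    set e : (Fin s × (Fin m → Fin s)) ≃ (Fin (m+1) → Fin s) :=
      (Fin.consEquiv (fun _ => Fin s)) with he
    rw [← Equiv.sum_comp e (fun a : Fin (m+1) → Fin s =>
      ENNReal.ofReal (nodeWeight p (List.ofFn a)) * ∫⁻ x, F (K.invNode (List.ofFn a) x) ∂μ)]
    rw [Fintype.sum_prod_type]
    refine Finset.sum_congr rfl (fun j _ => ?_)
    rw [ih (F := fun x => F (K.inv j x)) (hF.comp (K.measurable_inv j)), Finset.mul_sum]
    refine Finset.sum_congr rfl (fun t _ => ?_)
    have hofn : List.ofFn (e (j, t)) = j :: List.ofFn t := by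
      have : e (j, t) = Fin.cons j t := rfl
      rw [this, List.ofFn_succ]
      simp
    rw [hofn, nodeWeight_cons, ENNReal.ofReal_mul (le_of_lt (hp j)), mul_assoc]
    rfl

lemma sum_weights (hp : ∀ j, 0 < p j) (K : TreeSystem p μ T)
    [IsProbabilityMeasure μ] (m : ℕ) :
    ∑ a : Fin m → Fin s, ENNReal.ofReal (nodeWeight p (List.ofFn a)) = 1 := by
  have h := lint_decomp_node hp K m (F := fun _ => (1:ℝ≥0∞)) measurable_const
  simp only [lintegral_const, measure_univ, mul_one] at h
  exact h.symm

end Aux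
namespace Aux
open MeasureTheory Filter
open scoped ENNReal
variable {s : ℕ} {p : Fin s → ℝ} {X : Type} [MeasurableSpace X]
  {μ : Measure X} {T : X → X}

/-- prepend a symbol to a one-sided sequence -/
def pre (j : Fin s) (ω : ℕ → Fin s) : ℕ → Fin s := fun k =>
  match k with
  | 0 => j
  | (k+1) => ω k

/-- prepend a list to a one-sided sequence -/
def appL (v : List (Fin s)) (ω : ℕ → Fin s) : ℕ → Fin s := v.foldr pre ω

@[simp] lemma appL_nil (ω : ℕ → Fin s) : appL [] ω = ω := rfl

@[simp] lemma appL_cons (a : Fin s) (v : List (Fin s)) (ω : ℕ → Fin s) :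
    appL (a :: v) ω = pre a (appL v ω) := rfl

lemma appL_eval : ∀ {m : ℕ} (a : Fin m → Fin s) (ω : ℕ → Fin s) (i : Fin m),
    appL (List.ofFn a) ω (i : ℕ) = a i := by
  intro m
  induction m with
  | zero => intro a ω i; exact absurd i.2 (by simp)
  | succ m ih =>
    intro a ω i
    rw [List.ofFn_succ, appL_cons]
    induction i using Fin.cases with
    | zero => rfl
    | succ i' =>
      have : ((i'.succ : Fin (m+1)) : ℕ) = (i' : ℕ) + 1 := rfl
      rw [this]
      exact ih (fun i => a i.succ) _ i'

lemma appL_pattern {m : ℕ} (a : Fin m → Fin s) (ω : ℕ → Fin s) :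
    (fun i : Fin m => appL (List.ofFn a) ω (i : ℕ)) = a :=
  funext (fun i => appL_eval a ω i)

variable {φ : X → ℕ → Fin s}

lemma prepend_ae (hp : ∀ j, 0 < p j) (K : TreeSystem p μ T)
    (hmp : MeasurePreserving T μ μ)
    (hφ : ∀ᵐ x ∂μ, ∀ k : ℕ, K.inv (φ x k) (T (T^[k] x)) = T^[k] x) (j : Fin s) :
    ∀ᵐ x ∂μ, φ (K.inv j x) = pre j (φ x) := by
  have h1 : ∀ᵐ x ∂μ, ∀ k, K.inv (φ (K.inv j x) k) (T (T^[k] (K.inv j x)))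
      = T^[k] (K.inv j x) := (qmp_inv hp K j).ae hφ
  have h4 : ∀ᵐ x ∂μ, ∀ k : ℕ, ∀ j' k' : Fin s,
      K.inv j' (T^[k+1] x) = K.inv k' (T^[k+1] x) → j' = k' := by
    rw [ae_all_iff]
    intro k
    exact ((hmp.iterate (k+1)).quasiMeasurePreserving).ae (uniq_ae K)
  filter_upwards [h1, K.left_inv j, uniq_ae K, h4, hφ] with x hx1 hx2 hx3 hx4 hx5
  funext k
  cases k with
  | zero =>
    have h := hx1 0
    simp only [Function.iterate_zero_apply] at h
    rw [hx2] at h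
    exact hx3 _ _ h
  | succ k =>
    have ha := hx1 (k+1)
    have hit : T^[k+1] (K.inv j x) = T^[k] x := by
      rw [Function.iterate_succ_apply, hx2]
    rw [hit] at ha
    have hb := hx5 k
    have hc : K.inv (φ (K.inv j x) (k+1)) (T^[k+1] x) = K.inv (φ x k) (T^[k+1] x) := by
      rw [Function.iterate_succ_apply', ha, hb]
    exact hx4 k _ _ hc

lemma node_ae (hp : ∀ j, 0 < p j) (K : TreeSystem p μ T)
    (hmp : MeasurePreserving T μ μ)
    (hφ : ∀ᵐ x ∂μ, ∀ k : ℕ, K.inv (φ x k) (T (T^[k] x)) = T^[k] x) (v : List (Fin s)) :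
    ∀ᵐ x ∂μ, φ (K.invNode v x) = appL v (φ x) := by
  induction v with
  | nil => exact Filter.Eventually.of_forall (fun x => rfl)
  | cons a v ih =>
    filter_upwards [ih, (qmp_invNode hp K v).ae (prepend_ae hp K hmp hφ a)] with x h1 h2
    rw [invNode_cons, h2, h1, appL_cons]

lemma intertwine_ae (K : TreeSystem p μ T) (hmp : MeasurePreserving T μ μ)
    (hφ : ∀ᵐ x ∂μ, ∀ k : ℕ, K.inv (φ x k) (T (T^[k] x)) = T^[k] x) :
    ∀ᵐ x ∂μ, φ (T x) = shiftMap (φ x) := by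
  have hA : ∀ᵐ x ∂μ, ∀ k, K.inv (φ (T x) k) (T (T^[k] (T x))) = T^[k] (T x) :=
    (hmp.quasiMeasurePreserving).ae hφ
  have h4 : ∀ᵐ x ∂μ, ∀ k : ℕ, ∀ j' k' : Fin s,
      K.inv j' (T^[k+2] x) = K.inv k' (T^[k+2] x) → j' = k' := by
    rw [ae_all_iff]
    intro k
    exact ((hmp.iterate (k+2)).quasiMeasurePreserving).ae (uniq_ae K)
  filter_upwards [hφ, hA, h4] with x hx1 hx2 hx3
  funext k
  have ha := hx2 k
  rw [← Function.iterate_succ_apply] at ha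
  have hb := hx1 (k+1)
  have hc : K.inv (φ (T x) k) (T^[k+2] x) = K.inv (φ x (k+1)) (T^[k+2] x) := by
    rw [show (k+2) = (k+1)+1 from rfl, Function.iterate_succ_apply', ha, hb]
  exact hx3 k _ _ hc

end Aux
namespace Aux
open MeasureTheory Filter
open scoped ENNReal
variable {s : ℕ} {p : Fin s → ℝ} {X : Type} [MeasurableSpace X]
  {μ : Measure X} {T : X → X} {φ : X → ℕ → Fin s}

/-- elementary cylinders in the codomain -/
def cyl (s : ℕ) (n : ℕ) (a : Fin n → Fin s) : Set (ℕ → Fin s) :=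
  {ω | ∀ i : Fin n, ω (i : ℕ) = a i}

lemma cyl_measurableSet {n : ℕ} (a : Fin n → Fin s) : MeasurableSet (cyl s n a) := by
  have : cyl s n a = ⋂ i : Fin n, (fun ω : ℕ → Fin s => ω (i : ℕ)) ⁻¹' {a i} := by
    ext ω; simp [cyl]
  rw [this]
  exact MeasurableSet.iInter fun i => (measurable_pi_apply _) (measurableSet_singleton _)

lemma cylX_measurableSet (hφm : Measurable φ) {n : ℕ} (a : Fin n → Fin s) :
    MeasurableSet {x : X | ∀ i : Fin n, φ x (i : ℕ) = a i} := by
  have : {x : X | ∀ i : Fin n, φ x (i : ℕ) = a i} = φ ⁻¹' cyl s n a := rfl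
  rw [this]
  exact hφm (cyl_measurableSet a)

lemma cyl_meas (hp : ∀ j, 0 < p j) (K : TreeSystem p μ T)
    (hmp : MeasurePreserving T μ μ) [IsProbabilityMeasure μ]
    (hφm : Measurable φ)
    (hφ : ∀ᵐ x ∂μ, ∀ k : ℕ, K.inv (φ x k) (T (T^[k] x)) = T^[k] x) :
    ∀ (n : ℕ) (a : Fin n → Fin s),
    μ {x : X | ∀ i : Fin n, φ x (i : ℕ) = a i} = ∏ i, ENNReal.ofReal (p (a i)) := by
  intro n
  induction n with
  | zero =>
    intro a
    have : {x : X | ∀ i : Fin 0, φ x (i : ℕ) = a i} = Set.univ := by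
      ext x; simp
    simp [this]
  | succ n ih =>
    intro a
    set A := {x : X | ∀ i : Fin (n+1), φ x (i : ℕ) = a i} with hA
    have hAm : MeasurableSet A := cylX_measurableSet hφm a
    set A' := {x : X | ∀ i : Fin n, φ x (i : ℕ) = a i.succ} with hA'
    have hdec : μ A = ∑ j, ENNReal.ofReal (p j) * μ (K.inv j ⁻¹' A) := by
      conv_lhs => rw [K.decomp]
      simp [Measure.coe_finset_sum, Finset.sum_apply, Measure.smul_apply,
        Measure.map_apply (K.measurable_inv _) hAm]
    have hae : ∀ j : Fin s, μ (K.inv j ⁻¹' A) = μ (if j = a 0 then A' else (∅ : Set X)) := by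
      intro j
      refine measure_congr (Filter.eventuallyEq_set.2 ?_)
      filter_upwards [prepend_ae hp K hmp hφ j] with x hx
      constructor
      · intro hmem
        have hall : ∀ i : Fin (n+1), pre j (φ x) (i : ℕ) = a i := by
          intro i
          have := hmem i
          rwa [hx] at this
        have hj : j = a 0 := hall 0
        rw [if_pos hj]
        intro i
        have := hall i.succ
        exact this
      · intro hmem
        by_cases hj : j = a 0
        · rw [if_pos hj] at hmem
          intro i
          rw [hx]
          induction i using Fin.cases with
          | zero => exact hj
          | succ i' => exact hmem i'
        · rw [if_neg hj] at hmem
          exact absurd hmem (Set.notMem_empty x)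
    rw [hdec]
    simp only [hae]
    rw [Finset.sum_eq_single (a 0)]
    · rw [if_pos rfl, ih (fun i => a i.succ), Fin.prod_univ_succ]
    · intro j _ hj
      rw [if_neg hj]
      simp
    · intro h
      exact absurd (Finset.mem_univ _) h

lemma map_eq (hp : ∀ j, 0 < p j) (K : TreeSystem p μ T)
    (hmp : MeasurePreserving T μ μ) [IsProbabilityMeasure μ]
    (hφm : Measurable φ)
    (hφ : ∀ᵐ x ∂μ, ∀ k : ℕ, K.inv (φ x k) (T (T^[k] x)) = T^[k] x)
    (ν : Measure (ℕ → Fin s)) (hν : IsBernoulli p ν) :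
    Measure.map φ μ = ν := by
  have hν1 : ν Set.univ = 1 := by
    have h := hν 0 (fun i => i.elim0)
    have huniv : {x : ℕ → Fin s | ∀ i : Fin 0, x (i : ℕ) = i.elim0} = Set.univ := by
      ext ω; simp
    rw [huniv] at h
    simpa using h
  set C : Set (Set (ℕ → Fin s)) := {S | ∃ (n : ℕ) (a : Fin n → Fin s), S = cyl s n a} with hC
  -- π-system
  have hsub : ∀ {n m : ℕ} (h : n ≤ m) (a : Fin n → Fin s) (b : Fin m → Fin s),
      (cyl s n a ∩ cyl s m b).Nonempty → cyl s n a ∩ cyl s m b = cyl s m b := by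
    intro n m h a b ⟨ω, hω⟩
    have hab : ∀ i : Fin n, a i = b (Fin.castLE h i) := by
      intro i
      have h1 := hω.1 i
      have h2 := hω.2 (Fin.castLE h i)
      rw [show ((Fin.castLE h i : Fin m) : ℕ) = (i : ℕ) from rfl] at h2
      rw [← h1, ← h2]
    apply Set.inter_eq_self_of_subset_right
    intro ω' hω' i
    rw [hab i]
    have := hω' (Fin.castLE h i)
    rwa [show ((Fin.castLE h i : Fin m) : ℕ) = (i : ℕ) from rfl] at this
  have hpi : IsPiSystem C := by
    rintro S1 ⟨n, a, rfl⟩ S2 ⟨m, b, rfl⟩ hne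
    rcases le_total n m with h | h
    · rw [hsub h a b hne]
      exact ⟨m, b, rfl⟩
    · rw [Set.inter_comm] at hne ⊢
      rw [hsub h b a hne]
      exact ⟨n, a, rfl⟩
  -- generation
  have hgen : (MeasurableSpace.pi : MeasurableSpace (ℕ → Fin s))
      = MeasurableSpace.generateFrom C := by
    refine le_antisymm ?_ ?_
    · refine iSup_le fun i => ?_
      rw [← measurable_iff_comap_le]
      refine @measurable_to_countable (Fin s) (ℕ → Fin s) _ _ (MeasurableSpace.generateFrom C) _ fun ω => ?_
      have : (fun ω' : ℕ → Fin s => ω' i) ⁻¹' {ω i}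
          = ⋃ a ∈ {a : Fin (i+1) → Fin s | a ⟨i, Nat.lt_succ_self i⟩ = ω i}, cyl s (i+1) a := by
        ext ω'
        simp only [Set.mem_preimage, Set.mem_singleton_iff, Set.mem_iUnion, Set.mem_setOf_eq]
        constructor
        · intro hω'
          refine ⟨fun k => ω' (k : ℕ), hω', fun k => rfl⟩
        · rintro ⟨a, ha, hmem⟩
          have := hmem ⟨i, Nat.lt_succ_self i⟩
          simpa [ha] using this
      rw [this]
      exact MeasurableSet.biUnion (Set.to_countable _)
        (fun a _ => MeasurableSpace.measurableSet_generateFrom ⟨i+1, a, rfl⟩)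
    · refine MeasurableSpace.generateFrom_le ?_
      rintro S ⟨n, a, rfl⟩
      exact cyl_measurableSet a
  haveI : IsProbabilityMeasure (Measure.map φ μ) := Measure.isProbabilityMeasure_map hφm.aemeasurable
  refine ext_of_generate_finite C hgen hpi ?_ ?_
  · rintro S ⟨n, a, rfl⟩
    rw [Measure.map_apply hφm (cyl_measurableSet a)]
    have : φ ⁻¹' cyl s n a = {x : X | ∀ i : Fin n, φ x (i : ℕ) = a i} := rfl
    rw [this, cyl_meas hp K hmp hφm hφ n a]
    exact (hν n a).symm
  · rw [measure_univ, hν1]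

end Aux
namespace Aux
open MeasureTheory Filter
open scoped ENNReal
variable {s : ℕ} {p : Fin s → ℝ} {X : Type} [MeasurableSpace X]
  {μ : Measure X} {T : X → X} {φ : X → ℕ → Fin s}

/-- level-`M+1` spread of `G` along the tree -/
def EBar (K : TreeSystem p μ T) (G : X → ℝ) (M : ℕ) : ℝ≥0∞ :=
  ∑ a : Fin (M+1) → Fin s, ENNReal.ofReal (nodeWeight p (List.ofFn a)) *
    ∫⁻ z, ∫⁻ z', ENNReal.ofReal
      |G (K.invNode (List.ofFn a) z) - G (K.invNode (List.ofFn a) z')| ∂μ ∂μ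

/-- conditional average of `G` over the branch determined by the first `M+1` symbols -/
def Hfn (K : TreeSystem p μ T) (G : X → ℝ) (M : ℕ) (ω : ℕ → Fin s) : ℝ :=
  ∫ z, G (K.invNode (List.ofFn (fun i : Fin (M+1) => ω (i : ℕ))) z) ∂μ

lemma measurable_hfn (K : TreeSystem p μ T) (G : X → ℝ) (hφm : Measurable φ) (M : ℕ) :
    Measurable (fun x => Hfn K G M (φ x)) := by
  have h1 : Measurable (fun x : X => (fun i : Fin (M+1) => φ x (i : ℕ))) :=
    measurable_pi_lambda _ (fun i => (measurable_pi_apply ((i : Fin (M+1)) : ℕ)).comp hφm)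
  have h2 : Measurable (fun b : Fin (M+1) → Fin s =>
      ∫ z, G (K.invNode (List.ofFn b) z) ∂μ) := measurable_of_finite _
  exact h2.comp h1

lemma claimA (hp : ∀ j, 0 < p j) (K : TreeSystem p μ T)
    (hmp : MeasurePreserving T μ μ) [IsProbabilityMeasure μ]
    (hφm : Measurable φ)
    (hφ : ∀ᵐ x ∂μ, ∀ k : ℕ, K.inv (φ x k) (T (T^[k] x)) = T^[k] x)
    {G : X → ℝ} (hG : Measurable G) (hGb : ∀ x, |G x| ≤ 1) (M : ℕ) :
    ∫⁻ x, ENNReal.ofReal |G x - Hfn K G M (φ x)| ∂μ ≤ EBar K G M := by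
  have hFmeas : Measurable (fun x => ENNReal.ofReal |G x - Hfn K G M (φ x)|) :=
    ((hG.sub (measurable_hfn K G hφm M)).abs).ennreal_ofReal
  rw [lint_decomp_node hp K (M+1) hFmeas]
  refine Finset.sum_le_sum (fun a _ => mul_le_mul_right ?_ _)
  set v := List.ofFn a with hv
  have hTv := measurable_invNode K v
  have hint : Integrable (fun z' => G (K.invNode v z')) μ :=
    (integrable_const (1:ℝ)).mono' ((hG.comp hTv).aestronglyMeasurable)
      (Filter.Eventually.of_forall fun z' => by simpa using hGb _)
  have hae : ∀ᵐ z ∂μ, ENNReal.ofReal |G (K.invNode v z) - Hfn K G M (φ (K.invNode v z))|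
      ≤ ∫⁻ z', ENNReal.ofReal |G (K.invNode v z) - G (K.invNode v z')| ∂μ := by
    filter_upwards [node_ae hp K hmp hφ v] with z hz
    have hpat : (fun i : Fin (M+1) => appL v (φ z) ((i : Fin (M+1)) : ℕ)) = a :=
      appL_pattern a (φ z)
    have hH : Hfn K G M (φ (K.invNode v z)) = ∫ z', G (K.invNode v z') ∂μ := by
      rw [hz]
      unfold Hfn
      rw [hpat]
    rw [hH]
    set c := G (K.invNode v z) with hc
    have hconst : ∫ (_ : X), c ∂μ = c := by simp
    have h1 : (∫ z', (c - G (K.invNode v z')) ∂μ) = c - ∫ z', G (K.invNode v z') ∂μ := by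
      rw [integral_sub (integrable_const c) hint, hconst]
    have habs : |c - ∫ z', G (K.invNode v z') ∂μ| ≤ ∫ z', |c - G (K.invNode v z')| ∂μ := by
      rw [← h1]
      have := norm_integral_le_integral_norm (μ := μ) (fun z' => c - G (K.invNode v z'))
      simpa [Real.norm_eq_abs] using this
    have hOfReal : ENNReal.ofReal (∫ z', |c - G (K.invNode v z')| ∂μ)
        = ∫⁻ z', ENNReal.ofReal |c - G (K.invNode v z')| ∂μ :=
      ofReal_integral_eq_lintegral_ofReal ((integrable_const c).sub hint).abs
        (Filter.Eventually.of_forall fun _ => abs_nonneg _)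
    exact le_trans (ENNReal.ofReal_le_ofReal habs) (le_of_eq hOfReal)
  exact lintegral_mono_ae hae

end Aux
namespace Aux
open MeasureTheory Filter
open scoped ENNReal
variable {s : ℕ} {p : Fin s → ℝ} {X : Type} [MeasurableSpace X]
  {μ : Measure X} {T : X → X}

lemma exists_good_level (hp : IsProbVec p) (hinj : Function.Injective p)
    (K : TreeSystem p μ T) [IsProbabilityMeasure μ]
    {g : X → Set.Icc (0:ℝ) 1} (hg : Measurable g)
    (htv : TvwBFor K g)
    {ε : ℝ} (hε : 0 < ε) (L : ℕ) :
    ∃ M, L ≤ M ∧ EBar K (fun x => (g x : ℝ)) M ≤ ENNReal.ofReal (8 * ε) := by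
  classical
  set G : X → ℝ := fun x => (g x : ℝ) with hGdef
  have hG : Measurable G := measurable_subtype_coe.comp hg
  have habs1 : ∀ x y : X, |G x - G y| ≤ 1 := by
    intro x y
    have h1 := (g x).2
    have h2 := (g y).2
    rw [Set.mem_Icc] at h1 h2
    rw [abs_sub_le_iff]
    constructor <;> simp only [hGdef] <;> linarith [h1.1, h1.2, h2.1, h2.2]
  have hdist : ∀ x y : X, dist (g x) (g y) = |G x - G y| := by
    intro x y
    rw [Subtype.dist_eq, Real.dist_eq]
  obtain ⟨N, hN⟩ := htv ε hε
  set n := max N (2*L + 1) with hn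
  have hnN : N ≤ n := le_max_left _ _
  have hnL : 2*L + 1 ≤ n := le_max_right _ _
  have hn0 : 0 < n := lt_of_lt_of_le (Nat.succ_pos _) hnL
  obtain ⟨A, hAm, hAμ, hAtb⟩ := hN n hnN
  -- the joint summand
  set Jf : X → X → ℝ≥0∞ := fun z z' => ∑ m ∈ Finset.range n, ∑ a : Fin (m+1) → Fin s,
    ENNReal.ofReal (nodeWeight p (List.ofFn a)) *
      ENNReal.ofReal |G (K.invNode (List.ofFn a) z) - G (K.invNode (List.ofFn a) z')|
    with hJf
  -- measurability bits
  have hq : ∀ (m : ℕ) (a : Fin (m+1) → Fin s), Measurable (fun zz : X × X =>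
      ENNReal.ofReal |G (K.invNode (List.ofFn a) zz.1) - G (K.invNode (List.ofFn a) zz.2)|) := by
    intro m a
    exact (((hG.comp (measurable_invNode K _)).comp measurable_fst).sub
      ((hG.comp (measurable_invNode K _)).comp measurable_snd)).abs.ennreal_ofReal
  have hqz : ∀ (m : ℕ) (a : Fin (m+1) → Fin s) (z : X), Measurable (fun z' : X =>
      ENNReal.ofReal |G (K.invNode (List.ofFn a) z) - G (K.invNode (List.ofFn a) z')|) := by
    intro m a z
    exact ((measurable_const.sub (hG.comp (measurable_invNode K _))).abs).ennreal_ofReal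
  have hqint : ∀ (m : ℕ) (a : Fin (m+1) → Fin s), Measurable (fun z : X =>
      ∫⁻ z', ENNReal.ofReal
        |G (K.invNode (List.ofFn a) z) - G (K.invNode (List.ofFn a) z')| ∂μ) := by
    intro m a
    exact Measurable.lintegral_prod_right (hq m a)
  -- swap identity
  have hswap : ∑ m ∈ Finset.range n, EBar K G m = ∫⁻ z, ∫⁻ z', Jf z z' ∂μ ∂μ := by
    have hinner : ∀ z : X, ∫⁻ z', Jf z z' ∂μ
        = ∑ m ∈ Finset.range n, ∑ a : Fin (m+1) → Fin s,
          ENNReal.ofReal (nodeWeight p (List.ofFn a)) *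
          ∫⁻ z', ENNReal.ofReal
            |G (K.invNode (List.ofFn a) z) - G (K.invNode (List.ofFn a) z')| ∂μ := by
      intro z
      rw [lintegral_finset_sum _ (fun m _ => Finset.measurable_sum _
        (fun a _ => ((hqz m a z).const_mul _)))]
      refine Finset.sum_congr rfl (fun m _ => ?_)
      rw [lintegral_finset_sum _ (fun a _ => ((hqz m a z).const_mul _))]
      refine Finset.sum_congr rfl (fun a _ => ?_)
      rw [lintegral_const_mul _ (hqz m a z)]
    calc ∑ m ∈ Finset.range n, EBar K G m
        = ∑ m ∈ Finset.range n, ∑ a : Fin (m+1) → Fin s,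
          ENNReal.ofReal (nodeWeight p (List.ofFn a)) *
          ∫⁻ z, ∫⁻ z', ENNReal.ofReal
            |G (K.invNode (List.ofFn a) z) - G (K.invNode (List.ofFn a) z')| ∂μ ∂μ := rfl
      _ = ∫⁻ z, ∑ m ∈ Finset.range n, ∑ a : Fin (m+1) → Fin s,
          ENNReal.ofReal (nodeWeight p (List.ofFn a)) *
          ∫⁻ z', ENNReal.ofReal
            |G (K.invNode (List.ofFn a) z) - G (K.invNode (List.ofFn a) z')| ∂μ ∂μ := by
          rw [lintegral_finset_sum _ (fun m _ => Finset.measurable_sum _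
            (fun a _ => ((hqint m a).const_mul _)))]
          refine Finset.sum_congr rfl (fun m _ => ?_)
          rw [lintegral_finset_sum _ (fun a _ => ((hqint m a).const_mul _))]
          refine Finset.sum_congr rfl (fun a _ => ?_)
          rw [lintegral_const_mul _ (hqint m a)]
      _ = ∫⁻ z, ∫⁻ z', Jf z z' ∂μ ∂μ := by
          refine lintegral_congr (fun z => ?_)
          rw [hinner z]
  -- pointwise bound on the good set
  have hJG : ∀ z ∈ A, ∀ z' ∈ A, Jf z z' ≤ ENNReal.ofReal (ε * n) := by
    intro z hz z' hz'
    have htb := hAtb z hz z' hz'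
    rw [tbar_eq hp.1 hinj] at htb
    set S : ℝ := ∑ m ∈ Finset.range n, ∑ a : Fin (m+1) → Fin s,
      dist (K.treeName g z (List.ofFn a)) (K.treeName g z' (List.ofFn a)) *
        nodeWeight p (List.ofFn a) with hS
    have hS_le : S ≤ ε * n := by
      have hn0' : (0:ℝ) < n := by exact_mod_cast hn0
      have h2 : S / n < ε := by rwa [one_div, inv_mul_eq_div] at htb
      exact le_of_lt ((div_lt_iff₀ hn0').1 h2)
    have hJS : Jf z z' = ENNReal.ofReal S := by
      rw [hS, ENNReal.ofReal_sum_of_nonneg (fun m _ => Finset.sum_nonneg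
        (fun a _ => mul_nonneg dist_nonneg (le_of_lt (nodeWeight_pos hp.1 _))))]
      refine Finset.sum_congr rfl (fun m _ => ?_)
      rw [ENNReal.ofReal_sum_of_nonneg (fun a _ => mul_nonneg dist_nonneg
        (le_of_lt (nodeWeight_pos hp.1 _)))]
      refine Finset.sum_congr rfl (fun a _ => ?_)
      rw [ENNReal.ofReal_mul dist_nonneg]
      rw [show K.treeName g z (List.ofFn a) = g (K.invNode (List.ofFn a) z) from rfl,
        show K.treeName g z' (List.ofFn a) = g (K.invNode (List.ofFn a) z') from rfl]
      rw [hdist]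
      ring
    rw [hJS]
    exact ENNReal.ofReal_le_ofReal hS_le
  have hJtop : ∀ z z' : X, Jf z z' ≤ (n : ℝ≥0∞) := by
    intro z z'
    have h1 : Jf z z' ≤ ∑ m ∈ Finset.range n, (1:ℝ≥0∞) := by
      refine Finset.sum_le_sum (fun m _ => ?_)
      calc ∑ a : Fin (m+1) → Fin s, ENNReal.ofReal (nodeWeight p (List.ofFn a)) *
            ENNReal.ofReal |G (K.invNode (List.ofFn a) z) - G (K.invNode (List.ofFn a) z')|
          ≤ ∑ a : Fin (m+1) → Fin s, ENNReal.ofReal (nodeWeight p (List.ofFn a)) * 1 := by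
            refine Finset.sum_le_sum (fun a _ => mul_le_mul_right ?_ _)
            calc ENNReal.ofReal |G (K.invNode (List.ofFn a) z) - G (K.invNode (List.ofFn a) z')|
                ≤ ENNReal.ofReal 1 := ENNReal.ofReal_le_ofReal (habs1 _ _)
              _ = 1 := ENNReal.ofReal_one
        _ = 1 := by
            simp only [mul_one]
            exact sum_weights hp.1 K (m+1)
    calc Jf z z' ≤ ∑ m ∈ Finset.range n, (1:ℝ≥0∞) := h1
      _ = (n : ℝ≥0∞) := by simp
  -- complement bound
  have hcompl : μ Aᶜ ≤ ENNReal.ofReal ε := by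
    rcases le_or_gt 1 ε with h1 | h1
    · calc μ Aᶜ ≤ 1 := prob_le_one
        _ = ENNReal.ofReal 1 := ENNReal.ofReal_one.symm
        _ ≤ ENNReal.ofReal ε := ENNReal.ofReal_le_ofReal h1
    · have h2 : μ Aᶜ = 1 - μ A := prob_compl_eq_one_sub hAm
      rw [h2]
      have h3 : ENNReal.ofReal (1 - ε) = 1 - ENNReal.ofReal ε := by
        rw [ENNReal.ofReal_sub 1 (le_of_lt hε), ENNReal.ofReal_one]
      calc 1 - μ A ≤ 1 - ENNReal.ofReal (1 - ε) := tsub_le_tsub_left hAμ 1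
        _ = 1 - (1 - ENNReal.ofReal ε) := by rw [h3]
        _ = ENNReal.ofReal ε := ENNReal.sub_sub_cancel ENNReal.one_ne_top
            (ENNReal.ofReal_le_one.2 (le_of_lt h1))
  -- integrate
  set C1 : ℝ≥0∞ := ENNReal.ofReal (ε * n) + (n:ℝ≥0∞) * ENNReal.ofReal ε with hC1
  have hinner_bound : ∀ z ∈ A, ∫⁻ z', Jf z z' ∂μ ≤ C1 := by
    intro z hz
    have hb : ∀ z', Jf z z' ≤ A.indicator (fun _ => ENNReal.ofReal (ε*n)) z'
        + Aᶜ.indicator (fun _ => (n:ℝ≥0∞)) z' := by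
      intro z'
      by_cases h : z' ∈ A
      · rw [Set.indicator_of_mem h, Set.indicator_of_notMem (by simpa using h)]
        rw [add_zero]
        exact hJG z hz z' h
      · rw [Set.indicator_of_notMem h, Set.indicator_of_mem (by simpa using h)]
        rw [zero_add]
        exact hJtop z z'
    calc ∫⁻ z', Jf z z' ∂μ
        ≤ ∫⁻ z', (A.indicator (fun _ => ENNReal.ofReal (ε*n)) z'
          + Aᶜ.indicator (fun _ => (n:ℝ≥0∞)) z') ∂μ := lintegral_mono hb
      _ = ENNReal.ofReal (ε*n) * μ A + (n:ℝ≥0∞) * μ Aᶜ := by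
          rw [lintegral_add_left (measurable_const.indicator hAm)]
          rw [lintegral_indicator hAm, lintegral_indicator hAm.compl]
          simp [mul_comm]
      _ ≤ ENNReal.ofReal (ε*n) * 1 + (n:ℝ≥0∞) * ENNReal.ofReal ε := by
          gcongr
          exact prob_le_one
      _ = C1 := by rw [mul_one]
  have houter : ∫⁻ z, ∫⁻ z', Jf z z' ∂μ ∂μ ≤ C1 + (n:ℝ≥0∞) * ENNReal.ofReal ε := by
    have hb : ∀ z, ∫⁻ z', Jf z z' ∂μ ≤ A.indicator (fun _ => C1) z
        + Aᶜ.indicator (fun _ => (n:ℝ≥0∞)) z := by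
      intro z
      by_cases h : z ∈ A
      · rw [Set.indicator_of_mem h, Set.indicator_of_notMem (by simpa using h), add_zero]
        exact hinner_bound z h
      · rw [Set.indicator_of_notMem h, Set.indicator_of_mem (by simpa using h), zero_add]
        calc ∫⁻ z', Jf z z' ∂μ ≤ ∫⁻ _, (n:ℝ≥0∞) ∂μ := lintegral_mono (fun z' => hJtop z z')
          _ = (n:ℝ≥0∞) := by simp
    calc ∫⁻ z, ∫⁻ z', Jf z z' ∂μ ∂μ
        ≤ ∫⁻ z, (A.indicator (fun _ => C1) z + Aᶜ.indicator (fun _ => (n:ℝ≥0∞)) z) ∂μ :=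
          lintegral_mono hb
      _ = C1 * μ A + (n:ℝ≥0∞) * μ Aᶜ := by
          rw [lintegral_add_left (measurable_const.indicator hAm)]
          rw [lintegral_indicator hAm, lintegral_indicator hAm.compl]
          simp [mul_comm]
      _ ≤ C1 * 1 + (n:ℝ≥0∞) * ENNReal.ofReal ε := by
          gcongr
          exact prob_le_one
      _ = C1 + (n:ℝ≥0∞) * ENNReal.ofReal ε := by rw [mul_one]
  -- conclusion by contradiction
  by_contra hcon
  push_neg at hcon
  have hlow : ∀ m ∈ Finset.Ico L n, ENNReal.ofReal (8 * ε) ≤ EBar K G m := by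
    intro m hm
    exact le_of_lt (hcon m (Finset.mem_Ico.1 hm).1)
  have hsum_low : ((n - L : ℕ) : ℝ≥0∞) * ENNReal.ofReal (8 * ε)
      ≤ ∑ m ∈ Finset.range n, EBar K G m := by
    calc ((n - L : ℕ) : ℝ≥0∞) * ENNReal.ofReal (8 * ε)
        = (Finset.Ico L n).card • ENNReal.ofReal (8 * ε) := by
          rw [Nat.card_Ico, nsmul_eq_mul]
      _ ≤ ∑ m ∈ Finset.Ico L n, EBar K G m := Finset.card_nsmul_le_sum _ _ _ hlow
      _ ≤ ∑ m ∈ Finset.range n, EBar K G m := Finset.sum_le_sum_of_subset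
          (by intro m hm; rw [Finset.mem_range]; exact (Finset.mem_Ico.1 hm).2)
  rw [hswap] at hsum_low
  have htot : ((n - L : ℕ) : ℝ≥0∞) * ENNReal.ofReal (8 * ε)
      ≤ C1 + (n:ℝ≥0∞) * ENNReal.ofReal ε := le_trans hsum_low houter
  set e : ℝ≥0∞ := ENNReal.ofReal ε with he
  have he0 : e ≠ 0 := by
    simp [he, ENNReal.ofReal_eq_zero, not_le, hε]
  have hetop : e ≠ ⊤ := ENNReal.ofReal_ne_top
  have hC1' : C1 + (n:ℝ≥0∞) * e = ((3 * n : ℕ) : ℝ≥0∞) * e := by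
    rw [hC1]
    have h1 : ENNReal.ofReal (ε * n) = e * (n:ℝ≥0∞) := by
      rw [he, ← ENNReal.ofReal_natCast n, ← ENNReal.ofReal_mul (le_of_lt hε)]
    rw [h1]
    push_cast
    ring
  have hL' : ((n - L : ℕ) : ℝ≥0∞) * ENNReal.ofReal (8 * ε)
      = (((n - L) * 8 : ℕ) : ℝ≥0∞) * e := by
    have h8 : ENNReal.ofReal (8 * ε) = ((8:ℕ) : ℝ≥0∞) * e := by
      rw [he, ENNReal.ofReal_mul (by norm_num : (0:ℝ) ≤ (8:ℝ)), ← ENNReal.ofReal_natCast 8]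
      norm_num
    rw [h8]
    push_cast
    ring
  rw [hC1', hL'] at htot
  have hcancel : (((n - L) * 8 : ℕ) : ℝ≥0∞) ≤ ((3 * n : ℕ) : ℝ≥0∞) :=
    (ENNReal.mul_le_mul_iff_left he0 hetop).1 htot
  have hNat : (n - L) * 8 ≤ 3 * n := by exact_mod_cast hcancel
  omega

end Aux

/-- **Theorem 2.5.1.** Let `p` be a probability vector with pairwise distinct components and let
`X` be a tvwB `p`-endomorphism.  Then the canonical factor map `φ : X → B⁺(p)`, defined by
`φ(x)_k = j` whenever `p_X(T^k x) = p_j` (i.e. `T^k x` is the `j`-labelled preimage of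
`T^{k+1} x`), is an isomorphism. -/
theorem canonical_factor_map_is_isomorphism
    {s : ℕ} (p : Fin s → ℝ) (hp : IsProbVec p)
    (hdistinct : Function.Injective p)
    {X : Type} [MeasurableSpace X] [StandardBorelSpace X]
    (μ : Measure X) [IsProbabilityMeasure μ] [NullSingletonClass μ]
    (T : X → X) (hX : IsPEndo p μ T) (htvwb : TvwB p μ T)
    (K : TreeSystem p μ T)
    (ν : Measure (ℕ → Fin s)) (hν : IsBernoulli p ν)
    (φ : X → ℕ → Fin s) (hφm : Measurable φ)
    (hφ : ∀ᵐ x ∂μ, ∀ k : ℕ, K.inv (φ x k) (T (T^[k] x)) = T^[k] x) :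
    IsIsoMod0Via μ T ν (shiftMap (α := Fin s)) φ := by
  classical
  obtain ⟨hTm, hmp, -, -⟩ := hX
  have hp1 := hp.1
  -- an injective measurable map into [0,1]
  obtain ⟨e, he⟩ := exists_measurableEmbedding_real X
  have hπ := Real.pi_pos
  set u : ℝ → ℝ := fun t => 1/2 + Real.arctan t / Real.pi with hu
  have hu_mem : ∀ t, u t ∈ Set.Icc (0:ℝ) 1 := by
    intro t
    obtain ⟨h1, h2⟩ := Real.arctan_mem_Ioo t
    have e2 : Real.arctan t / Real.pi ≤ 1/2 := by
      rw [div_le_iff₀ hπ]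
      linarith
    have e1 : -(1/2 : ℝ) ≤ Real.arctan t / Real.pi := by
      rw [le_div_iff₀ hπ]
      linarith
    constructor <;> simp only [hu] <;> linarith
  have hu_inj : Function.Injective u := by
    intro t1 t2 h
    simp only [hu] at h
    have h2 : Real.arctan t1 / Real.pi = Real.arctan t2 / Real.pi := by linarith
    have h3 : Real.arctan t1 * Real.pi = Real.arctan t2 * Real.pi :=
      (div_eq_div_iff hπ.ne' hπ.ne').1 h2
    exact Real.arctan_injective (mul_right_cancel₀ hπ.ne' h3)
  have hu_cont : Continuous u := continuous_const.add (Real.continuous_arctan.div_const _)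
  set g : X → Set.Icc (0:ℝ) 1 := fun x => ⟨u (e x), hu_mem _⟩ with hgdef
  have hg_meas : Measurable g :=
    Measurable.subtype_mk (hu_cont.measurable.comp he.measurable)
  set G : X → ℝ := fun x => (g x : ℝ) with hGdef
  have hG_meas : Measurable G := measurable_subtype_coe.comp hg_meas
  have hG_inj : Function.Injective G := by
    intro x y h
    exact he.injective (hu_inj h)
  have hGb : ∀ x, |G x| ≤ 1 := by
    intro x
    have h1 := (g x).2
    rw [Set.mem_Icc] at h1
    rw [abs_le]
    exact ⟨by linarith [h1.1], h1.2⟩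
  -- tvwB for g
  have htv : TvwBFor K g := htvwb K (Set.Icc (0:ℝ) 1) g hg_meas
  -- choose good levels
  have hchoose : ∀ k : ℕ, ∃ M, k ≤ M ∧ Aux.EBar K G M ≤ ENNReal.ofReal ((1/2)^k) := by
    intro k
    have hεk : (0:ℝ) < (1/2)^k / 8 := by positivity
    obtain ⟨M, hM1, hM2⟩ := Aux.exists_good_level hp hdistinct K hg_meas htv hεk k
    refine ⟨M, hM1, ?_⟩
    refine le_trans hM2 (le_of_eq ?_)
    congr 1
    ring
  choose M hMk hME using hchoose
  -- summability
  have hterm_meas : ∀ k : ℕ, Measurable (fun x => ENNReal.ofReal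
      |G x - Aux.Hfn K G (M k) (φ x)|) :=
    fun k => ((hG_meas.sub (Aux.measurable_hfn K G hφm (M k))).abs).ennreal_ofReal
  have hsum : ∑' k : ℕ, ∫⁻ x, ENNReal.ofReal |G x - Aux.Hfn K G (M k) (φ x)| ∂μ ≠ ⊤ := by
    have hle : ∀ k : ℕ, ∫⁻ x, ENNReal.ofReal |G x - Aux.Hfn K G (M k) (φ x)| ∂μ
        ≤ ENNReal.ofReal ((1/2)^k) :=
      fun k => le_trans (Aux.claimA hp1 K hmp hφm hφ hG_meas hGb (M k)) (hME k)
    have h2 : ∀ k : ℕ, ENNReal.ofReal ((1/2:ℝ)^k) = (2⁻¹ : ℝ≥0∞)^k := by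
      intro k
      rw [ENNReal.ofReal_pow (by norm_num : (0:ℝ) ≤ 1/2)]
      congr 1
      rw [show (1/2 : ℝ) = (2:ℝ)⁻¹ by norm_num,
        ENNReal.ofReal_inv_of_pos (by norm_num : (0:ℝ) < 2)]
      norm_num
    have h3 : ∑' k : ℕ, ENNReal.ofReal ((1/2:ℝ)^k) ≠ ⊤ := by
      simp only [h2]
      rw [ENNReal.tsum_geometric]
      refine ENNReal.inv_ne_top.2 ?_
      rw [ENNReal.one_sub_inv_two]
      simp
    exact ne_top_of_le_ne_top h3 (ENNReal.tsum_le_tsum hle)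
  have hlint : ∫⁻ x, ∑' k : ℕ, ENNReal.ofReal |G x - Aux.Hfn K G (M k) (φ x)| ∂μ ≠ ⊤ := by
    rw [lintegral_tsum (fun k => (hterm_meas k).aemeasurable)]
    exact hsum
  have hae_fin : ∀ᵐ x ∂μ, ∑' k : ℕ, ENNReal.ofReal |G x - Aux.Hfn K G (M k) (φ x)| < ⊤ :=
    ae_lt_top (Measurable.ennreal_tsum hterm_meas) hlint
  have hconv : ∀ᵐ x ∂μ, Filter.Tendsto (fun k => Aux.Hfn K G (M k) (φ x)) atTop (nhds (G x)) := by
    filter_upwards [hae_fin] with x hx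
    have h0 : Tendsto (fun k => ENNReal.ofReal |G x - Aux.Hfn K G (M k) (φ x)|) atTop (nhds 0) :=
      ENNReal.tendsto_atTop_zero_of_tsum_ne_top hx.ne
    have h1 : Tendsto (fun k => |G x - Aux.Hfn K G (M k) (φ x)|) atTop (nhds 0) := by
      have h2 := (ENNReal.tendsto_toReal (by simp : (0:ℝ≥0∞) ≠ ⊤)).comp h0
      have h3 : (ENNReal.toReal ∘ fun k => ENNReal.ofReal |G x - Aux.Hfn K G (M k) (φ x)|)
          = fun k => |G x - Aux.Hfn K G (M k) (φ x)| := by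
        funext k
        simp [Function.comp, ENNReal.toReal_ofReal (abs_nonneg _)]
      rw [h3] at h2
      simpa using h2
    have h1' : Tendsto (fun k => -|G x - Aux.Hfn K G (M k) (φ x)|) atTop (nhds 0) := by
      simpa using h1.neg
    have h2 : Tendsto (fun k => G x - Aux.Hfn K G (M k) (φ x)) atTop (nhds 0) :=
      tendsto_of_tendsto_of_tendsto_of_le_of_le h1' h1
        (fun k => neg_abs_le _) (fun k => le_abs_self _)
    have h3 : Tendsto (fun k => G x - (G x - Aux.Hfn K G (M k) (φ x))) atTop
        (nhds (G x - 0)) := Tendsto.sub tendsto_const_nhds h2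
    simpa using h3
  -- the good set
  have hgood : ∀ᵐ x ∂μ, (φ (T x) = shiftMap (φ x)) ∧
      Filter.Tendsto (fun k => Aux.Hfn K G (M k) (φ x)) atTop (nhds (G x)) :=
    (Aux.intertwine_ae K hmp hφ).and hconv
  have hnull : μ {x | ¬ ((φ (T x) = shiftMap (φ x)) ∧
      Filter.Tendsto (fun k => Aux.Hfn K G (M k) (φ x)) atTop (nhds (G x)))} = 0 :=
    ae_iff.1 hgood
  obtain ⟨Nset, hNsub, hNm, hN0⟩ := exists_measurable_superset_of_null hnull
  have hSgood : ∀ x ∈ Nsetᶜ, (φ (T x) = shiftMap (φ x)) ∧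
      Filter.Tendsto (fun k => Aux.Hfn K G (M k) (φ x)) atTop (nhds (G x)) := by
    intro x hx
    by_contra hcon
    exact hx (hNsub hcon)
  have hinj_S : Set.InjOn φ Nsetᶜ := by
    intro x hx y hy hxy
    have hPx := (hSgood x hx).2
    have hPy := (hSgood y hy).2
    rw [← hxy] at hPy
    exact hG_inj (tendsto_nhds_unique hPx hPy)
  have himg : MeasurableSet (φ '' Nsetᶜ) :=
    MeasurableSet.image_of_measurable_injOn hNm.compl hφm hinj_S
  have hmap : Measure.map φ μ = ν := Aux.map_eq hp1 K hmp hφm hφ ν hν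
  haveI hνprob : IsProbabilityMeasure ν := hmap ▸ Measure.isProbabilityMeasure_map hφm.aemeasurable
  have hμS : μ Nsetᶜ = 1 := by
    rw [prob_compl_eq_one_sub hNm, hN0]
    simp
  have hν1 : ν (φ '' Nsetᶜ) = 1 := by
    rw [← hmap, Measure.map_apply hφm himg]
    refine le_antisymm prob_le_one ?_
    calc (1:ℝ≥0∞) = μ Nsetᶜ := hμS.symm
      _ ≤ μ (φ ⁻¹' (φ '' Nsetᶜ)) := measure_mono (Set.subset_preimage_image φ Nsetᶜ)
  refine ⟨hφm, hmap, Nset, (φ '' Nsetᶜ)ᶜ, hNm, himg.compl, hN0, ?_, ?_, ?_⟩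
  · rw [prob_compl_eq_one_sub himg, hν1]
    simp
  · rw [compl_compl]
    exact hinj_S.bijOn_image
  · intro x hx
    exact (hSgood x hx).1

end
end

section
/- If p is a probability vector with at least two identical components, then the one-sided Bernoulli shift B⁺(p) has uncountably many automorphisms. -/
open MeasureTheory Filter
open scoped ENNReal symmDiff Classical

noncomputable section

namespace BPAux





variable {s : ℕ}

/-- copies from statement file (for dev only) -/
def cylSet (n : ℕ) (a : Fin n → Fin s) : Set (ℕ → Fin s) := {x | ∀ i : Fin n, x (i : ℕ) = a i}

lemma measurableSet_cylSet (n : ℕ) (a : Fin n → Fin s) : MeasurableSet (cylSet n a) := by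
  have : cylSet n a = ⋂ i : Fin n, (fun x : ℕ → Fin s => x (i : ℕ)) ⁻¹' {a i} := by
    ext x; simp [cylSet]
  rw [this]
  exact MeasurableSet.iInter fun i => (measurable_pi_apply _) (measurableSet_singleton _)

def Cyl : Set (Set (ℕ → Fin s)) := {S | ∃ (n : ℕ) (a : Fin n → Fin s), S = cylSet n a}

lemma isPiSystem_Cyl : IsPiSystem (Cyl (s := s)) := by
  rintro S ⟨n, a, rfl⟩ T ⟨m, b, rfl⟩ hne
  obtain ⟨x, hxa, hxb⟩ := hne
  rcases le_total n m with h | h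
  · refine ⟨m, b, ?_⟩
    apply Set.inter_eq_self_of_subset_right
    intro y hy i
    have h1 : x (i : ℕ) = a i := hxa i
    have h2 : x (i : ℕ) = b ⟨i, lt_of_lt_of_le i.2 h⟩ := hxb ⟨i, lt_of_lt_of_le i.2 h⟩
    have h3 : y (i : ℕ) = b ⟨i, lt_of_lt_of_le i.2 h⟩ := hy ⟨i, lt_of_lt_of_le i.2 h⟩
    rw [h3, ← h2, h1]
  · refine ⟨n, a, ?_⟩
    apply Set.inter_eq_self_of_subset_left
    intro y hy i
    have h1 : x (i : ℕ) = b i := hxb i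
    have h2 : x (i : ℕ) = a ⟨i, lt_of_lt_of_le i.2 h⟩ := hxa ⟨i, lt_of_lt_of_le i.2 h⟩
    have h3 : y (i : ℕ) = a ⟨i, lt_of_lt_of_le i.2 h⟩ := hy ⟨i, lt_of_lt_of_le i.2 h⟩
    rw [h3, ← h2, h1]

lemma coord_mem_generateFrom (n : ℕ) (c : Fin s) :
    MeasurableSet[MeasurableSpace.generateFrom (Cyl (s := s))] {x : ℕ → Fin s | x n = c} := by
  have : {x : ℕ → Fin s | x n = c}
      = ⋃ (a : Fin (n+1) → Fin s) (_ : a ⟨n, Nat.lt_succ_self n⟩ = c), cylSet (n+1) a := by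
    ext x
    constructor
    · intro hx
      refine Set.mem_iUnion.2 ⟨fun i => x (i : ℕ), Set.mem_iUnion.2 ⟨hx, fun i => rfl⟩⟩
    · rintro hx
      obtain ⟨a, ha⟩ := Set.mem_iUnion.1 hx
      obtain ⟨hac, hxa⟩ := Set.mem_iUnion.1 ha
      have := hxa ⟨n, Nat.lt_succ_self n⟩
      simpa [hac] using this
  rw [this]
  exact MeasurableSet.iUnion fun a => MeasurableSet.iUnion fun _ =>
    MeasurableSpace.measurableSet_generateFrom ⟨n+1, a, rfl⟩

lemma generateFrom_Cyl : MeasurableSpace.generateFrom (Cyl (s := s)) = MeasurableSpace.pi := by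
  apply le_antisymm
  · apply MeasurableSpace.generateFrom_le
    rintro S ⟨n, a, rfl⟩
    exact measurableSet_cylSet n a
  · rw [MeasurableSpace.pi]
    apply iSup_le
    intro n
    rw [MeasurableSpace.comap_le_iff_le_map]
    intro S _
    have : (fun x : ℕ → Fin s => x n) ⁻¹' S = ⋃ c ∈ S, {x : ℕ → Fin s | x n = c} := by
      ext x; simp
    rw [MeasurableSpace.map_def, this]
    exact MeasurableSet.biUnion S.to_countable fun c _ => coord_mem_generateFrom n c

variable {p : Fin s → ℝ} {ν : Measure (ℕ → Fin s)}

lemma nu_cylSet (hν : IsBernoulli p ν) (n : ℕ) (a : Fin n → Fin s) :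
    ν (cylSet n a) = ∏ i, ENNReal.ofReal (p (a i)) := hν n a

lemma nu_univ (hν : IsBernoulli p ν) : ν Set.univ = 1 := by
  have h := hν 0 (fun i => i.elim0)
  have : cylSet 0 (fun i : Fin 0 => i.elim0) = (Set.univ : Set (ℕ → Fin s)) := by
    ext x; simp [cylSet]
  rw [cylSet] at this
  rw [this] at h
  simpa using h

lemma nu_prob (hν : IsBernoulli p ν) : IsProbabilityMeasure ν := ⟨nu_univ hν⟩

/-- two measures agreeing on cylinders agree -/
lemma ext_cyl (hν : IsBernoulli p ν) {μ : Measure (ℕ → Fin s)}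
    (huniv : μ Set.univ = 1)
    (h : ∀ (n : ℕ) (a : Fin n → Fin s), μ (cylSet n a) = ν (cylSet n a)) : μ = ν := by
  have : IsFiniteMeasure μ := ⟨by rw [huniv]; exact ENNReal.one_lt_top⟩
  refine ext_of_generate_finite (Cyl (s := s)) (generateFrom_Cyl).symm isPiSystem_Cyl ?_ ?_
  · rintro S ⟨n, a, rfl⟩; exact h n a
  · rw [huniv, nu_univ hν]






variable {s : ℕ}

/-- the tail from position `k` -/
def tl (k : ℕ) (x : ℕ → Fin s) : ℕ → Fin s := fun n => x (k + n)

lemma measurable_tl (k : ℕ) : Measurable (tl (s := s) k) :=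
  measurable_pi_lambda _ fun n => measurable_pi_apply (k + n)

variable (i j : Fin s)

/-- unconditional swap of symbols i,j at coordinate c -/
def gswap (c : ℕ) (x : ℕ → Fin s) : ℕ → Fin s :=
  fun m => if m = c then Equiv.swap i j (x m) else x m

lemma measurable_gswap (c : ℕ) : Measurable (gswap (s := s) i j c) := by
  apply measurable_pi_lambda
  intro m
  by_cases h : m = c
  · simp only [gswap, h, if_pos rfl]
    exact (measurable_of_countable (Equiv.swap i j)).comp (measurable_pi_apply c)
  · simp only [gswap, if_neg h]
    exact measurable_pi_apply m

/-- conditional swap at coordinate c, with decision set P -/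
def cswap (P : Set (ℕ → Fin s)) (c : ℕ) (x : ℕ → Fin s) : ℕ → Fin s :=
  if x ∈ P then gswap i j c x else x

/-- the full adapted map: swap coordinate k iff tl (k+1) x ∈ D -/
def Phi (D : Set (ℕ → Fin s)) (x : ℕ → Fin s) : ℕ → Fin s :=
  fun k => if tl (k+1) x ∈ D then Equiv.swap i j (x k) else x k

/-- partial map: apply decisions only below n -/
def PhiN (D : Set (ℕ → Fin s)) (n : ℕ) (x : ℕ → Fin s) : ℕ → Fin s :=
  fun k => if k < n ∧ tl (k+1) x ∈ D then Equiv.swap i j (x k) else x k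

lemma measurable_Phi {D : Set (ℕ → Fin s)} (hD : MeasurableSet D) :
    Measurable (Phi (s := s) i j D) := by
  apply measurable_pi_lambda
  intro k
  apply Measurable.ite ((measurable_tl (k+1)) hD)
  · exact (measurable_of_countable (Equiv.swap i j)).comp (measurable_pi_apply k)
  · exact measurable_pi_apply k

lemma measurable_PhiN {D : Set (ℕ → Fin s)} (hD : MeasurableSet D) (n : ℕ) :
    Measurable (PhiN (s := s) i j D n) := by
  apply measurable_pi_lambda
  intro k
  by_cases h : k < n
  · have : (fun x : ℕ → Fin s => PhiN i j D n x k)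
        = fun x => if tl (k+1) x ∈ D then Equiv.swap i j (x k) else x k := by
      funext x; simp [PhiN, h]
    rw [this]
    apply Measurable.ite ((measurable_tl (k+1)) hD)
    · exact (measurable_of_countable (Equiv.swap i j)).comp (measurable_pi_apply k)
    · exact measurable_pi_apply k
  · have : (fun x : ℕ → Fin s => PhiN i j D n x k) = fun x => x k := by
      funext x; simp [PhiN, h]
    rw [this]; exact measurable_pi_apply k



variable {s : ℕ} {p : Fin s → ℝ} {ν : Measure (ℕ → Fin s)}

-- dev-local copies of part-1 results (to be merged later)
variable {i j : Fin s}

lemma p_swap (hpij : p i = p j) (c : Fin s) : p (Equiv.swap i j c) = p c := by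
  rcases eq_or_ne c i with rfl | hci
  · rw [Equiv.swap_apply_left]; exact hpij.symm
  rcases eq_or_ne c j with rfl | hcj
  · rw [Equiv.swap_apply_right]; exact hpij
  · rw [Equiv.swap_apply_of_ne_of_ne hci hcj]

/-- M1 : unconditional single-coordinate swap preserves ν -/
lemma map_gswap (hν : IsBernoulli p ν) (hpij : p i = p j) (c : ℕ) :
    Measure.map (gswap i j c) ν = ν := by
  apply ext_cyl hν
  · rw [Measure.map_apply (measurable_gswap i j c) MeasurableSet.univ]
    simp [nu_univ hν]
  intro n a
  rw [Measure.map_apply (measurable_gswap i j c) (measurableSet_cylSet n a)]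
  have hpre : gswap i j c ⁻¹' cylSet n a
      = cylSet n (fun k => if (k : ℕ) = c then Equiv.swap i j (a k) else a k) := by
    ext x
    simp only [Set.mem_preimage, cylSet, Set.mem_setOf_eq, gswap]
    constructor
    · intro h k
      have := h k
      by_cases hk : (k : ℕ) = c
      · rw [if_pos hk] at this ⊢
        rw [← this, Equiv.swap_apply_self]
      · rw [if_neg hk] at this ⊢; exact this
    · intro h k
      have := h k
      by_cases hk : (k : ℕ) = c
      · rw [if_pos hk] at this ⊢
        rw [this, Equiv.swap_apply_self]
      · rw [if_neg hk] at this ⊢; exact this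
  rw [hpre, nu_cylSet hν, nu_cylSet hν]
  apply Finset.prod_congr rfl
  intro k _
  by_cases hk : (k : ℕ) = c
  · rw [if_pos hk, p_swap hpij]
  · rw [if_neg hk]

/-- M2 : conditional single-coordinate swap preserves ν, if decision invariant under the swap -/
lemma map_cswap (hν : IsBernoulli p ν) (hpij : p i = p j) (c : ℕ)
    {P : Set (ℕ → Fin s)} (hP : MeasurableSet P)
    (hinv : ∀ x, gswap i j c x ∈ P ↔ x ∈ P) :
    Measure.map (cswap i j P c) ν = ν := by
  have hmeas : Measurable (cswap i j P c) := by
    apply Measurable.ite hP (measurable_gswap i j c) measurable_id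
  apply Measure.ext
  intro S hS
  rw [Measure.map_apply hmeas hS]
  have hdecomp : cswap i j P c ⁻¹' S = (P ∩ gswap i j c ⁻¹' S) ∪ (Pᶜ ∩ S) := by
    ext x
    simp only [Set.mem_preimage, cswap, Set.mem_union, Set.mem_inter_iff, Set.mem_compl_iff]
    by_cases hx : x ∈ P
    · simp [hx]
    · simp [hx]
  rw [hdecomp]
  have hdisj : Disjoint (P ∩ gswap i j c ⁻¹' S) (Pᶜ ∩ S) :=
    Disjoint.mono Set.inter_subset_left Set.inter_subset_left disjoint_compl_right
  rw [measure_union hdisj (hP.compl.inter hS)]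
  have h1 : P ∩ gswap i j c ⁻¹' S = gswap i j c ⁻¹' (P ∩ S) := by
    rw [Set.preimage_inter]
    congr 1
    ext x; exact (hinv x).symm
  have h2 : ν (gswap i j c ⁻¹' (P ∩ S)) = ν (P ∩ S) := by
    conv_rhs => rw [← map_gswap hν hpij c]
    rw [Measure.map_apply (measurable_gswap i j c) (hP.inter hS)]
  rw [h1, h2]
  have hd : Pᶜ ∩ S = S \ P := by rw [Set.diff_eq, Set.inter_comm]
  rw [Set.inter_comm P S, hd]
  exact measure_inter_add_diff S hP


variable {s : ℕ} {p : Fin s → ℝ} {ν : Measure (ℕ → Fin s)} {i j : Fin s}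

lemma gswap_apply_ne (c m : ℕ) (h : m ≠ c) (x : ℕ → Fin s) : gswap i j c x m = x m := by
  simp [gswap, h]

lemma tl_gswap (c : ℕ) (k : ℕ) (hk : c < k) (x : ℕ → Fin s) :
    tl k (gswap i j c x) = tl k x := by
  funext n
  exact gswap_apply_ne c (k + n) (by omega) x

/-- composition identity -/
lemma PhiN_succ (D : Set (ℕ → Fin s)) (n : ℕ) (x : ℕ → Fin s) :
    PhiN i j D (n+1) x = cswap i j {y | tl (n+1) y ∈ D} n (PhiN i j D n x) := by
  have htail : ∀ m, n ≤ m → PhiN i j D n x m = x m := by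
    intro m hm
    simp only [PhiN]
    rw [if_neg]
    rintro ⟨h1, -⟩; omega
  have htl : tl (n+1) (PhiN i j D n x) = tl (n+1) x := by
    funext m
    exact htail (n + 1 + m) (by omega)
  have hmem : (PhiN i j D n x ∈ {y : ℕ → Fin s | tl (n+1) y ∈ D}) ↔ tl (n+1) x ∈ D := by
    simp only [Set.mem_setOf_eq, htl]
  funext m
  rcases lt_trichotomy m n with hmn | hmn | hmn
  · -- m < n : RHS untouched by the cswap at coordinate n
    have hRHS : cswap i j {y : ℕ → Fin s | tl (n+1) y ∈ D} n (PhiN i j D n x) m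
        = PhiN i j D n x m := by
      simp only [cswap]
      by_cases h : PhiN i j D n x ∈ {y : ℕ → Fin s | tl (n+1) y ∈ D}
      · rw [if_pos h, gswap_apply_ne n m (by omega)]
      · rw [if_neg h]
    rw [hRHS]
    simp only [PhiN]
    by_cases hd : tl (m+1) x ∈ D
    · rw [if_pos ⟨by omega, hd⟩, if_pos ⟨hmn, hd⟩]
    · rw [if_neg (by rintro ⟨-, h⟩; exact hd h), if_neg (by rintro ⟨-, h⟩; exact hd h)]
  · -- m = n
    subst hmn
    simp only [cswap]
    by_cases hd : tl (m+1) x ∈ D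
    · rw [if_pos (hmem.2 hd)]
      simp only [gswap, if_pos rfl, htail m le_rfl]
      simp only [PhiN]
      rw [if_pos ⟨Nat.lt_succ_self m, hd⟩]
      simp
    · rw [if_neg (fun h => hd (hmem.1 h)), htail m le_rfl]
      simp only [PhiN]
      rw [if_neg (by rintro ⟨-, h⟩; exact hd h)]
  · -- m > n
    have hRHS : cswap i j {y : ℕ → Fin s | tl (n+1) y ∈ D} n (PhiN i j D n x) m
        = x m := by
      simp only [cswap]
      by_cases h : PhiN i j D n x ∈ {y : ℕ → Fin s | tl (n+1) y ∈ D}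
      · rw [if_pos h, gswap_apply_ne n m (by omega), htail m (by omega)]
      · rw [if_neg h, htail m (by omega)]
    rw [hRHS]
    simp only [PhiN]
    rw [if_neg (by rintro ⟨h, -⟩; omega)]

lemma map_PhiN (hν : IsBernoulli p ν) (hpij : p i = p j)
    {D : Set (ℕ → Fin s)} (hD : MeasurableSet D) (n : ℕ) :
    Measure.map (PhiN i j D n) ν = ν := by
  induction n with
  | zero =>
      have : PhiN i j D 0 = id := by
        funext x k; simp [PhiN]
      rw [this, Measure.map_id]
  | succ n ih =>
      have hcomp : PhiN i j D (n+1) = (cswap i j {y | tl (n+1) y ∈ D} n) ∘ (PhiN i j D n) := by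
        funext x
        exact PhiN_succ D n x
      have hPmeas : MeasurableSet {y : ℕ → Fin s | tl (n+1) y ∈ D} := (measurable_tl (n+1)) hD
      have hinv : ∀ x, gswap i j n x ∈ {y : ℕ → Fin s | tl (n+1) y ∈ D}
          ↔ x ∈ {y : ℕ → Fin s | tl (n+1) y ∈ D} := by
        intro x
        simp only [Set.mem_setOf_eq, tl_gswap n (n+1) (Nat.lt_succ_self n)]
      have hcm : Measurable (cswap i j {y : ℕ → Fin s | tl (n+1) y ∈ D} n) :=
        Measurable.ite hPmeas (measurable_gswap i j n) measurable_id
      rw [hcomp, ← Measure.map_map hcm (measurable_PhiN i j hD n), ih,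
        map_cswap hν hpij n hPmeas hinv]

/-- M4 : the adapted swap map preserves ν -/
lemma map_Phi (hν : IsBernoulli p ν) (hpij : p i = p j)
    {D : Set (ℕ → Fin s)} (hD : MeasurableSet D) :
    Measure.map (Phi i j D) ν = ν := by
  apply ext_cyl hν
  · rw [Measure.map_apply (measurable_Phi i j hD) MeasurableSet.univ]
    simp [nu_univ hν]
  intro n a
  rw [Measure.map_apply (measurable_Phi i j hD) (measurableSet_cylSet n a)]
  have : Phi i j D ⁻¹' cylSet n a = PhiN i j D n ⁻¹' cylSet n a := by
    ext x
    simp only [Set.mem_preimage, cylSet, Set.mem_setOf_eq]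
    have hcoord : ∀ k : Fin n, Phi i j D x (k : ℕ) = PhiN i j D n x (k : ℕ) := by
      intro k
      simp only [Phi, PhiN]
      by_cases hD' : tl ((k : ℕ)+1) x ∈ D
      · rw [if_pos hD', if_pos ⟨k.2, hD'⟩]
      · rw [if_neg hD', if_neg (by rintro ⟨-, h⟩; exact hD' h)]
    constructor
    · intro h k; rw [← hcoord k]; exact h k
    · intro h k; rw [hcoord k]; exact h k
  calc ν (Phi i j D ⁻¹' cylSet n a) = ν (PhiN i j D n ⁻¹' cylSet n a) := by rw [this]
    _ = (Measure.map (PhiN i j D n) ν) (cylSet n a) :=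
        (Measure.map_apply (measurable_PhiN i j hD n) (measurableSet_cylSet n a)).symm
    _ = ν (cylSet n a) := by rw [map_PhiN hν hpij hD n]

/-- commutation with the shift (exact, everywhere) -/
lemma Phi_shift (D : Set (ℕ → Fin s)) (x : ℕ → Fin s) :
    Phi i j D (fun n => x (n+1)) = fun k => Phi i j D x (k+1) := by
  funext k
  have : tl (k+1) (fun n => x (n+1)) = tl (k+2) x := by
    funext m; simp only [tl]; congr 1; omega
  simp only [Phi, this]





variable {s : ℕ} {p : Fin s → ℝ} {ν : Measure (ℕ → Fin s)}

/-- events depending on finitely many coordinates -/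
def projPre (N : ℕ) (T : Set (Fin N → Fin s)) : Set (ℕ → Fin s) :=
  {x | (fun i : Fin N => x (i : ℕ)) ∈ T}

lemma measurable_proj (N : ℕ) : Measurable (fun (x : ℕ → Fin s) (i : Fin N) => x (i : ℕ)) :=
  measurable_pi_lambda _ fun i => measurable_pi_apply (i : ℕ)

lemma measurableSet_fintype {α : Type*} [MeasurableSpace α] [MeasurableSingletonClass α]
    [Finite α] (T : Set α) : MeasurableSet T :=
  T.to_countable.measurableSet

lemma measurableSet_projPre (N : ℕ) (T : Set (Fin N → Fin s)) :
    MeasurableSet (projPre N T) :=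
  (measurable_proj N) (measurableSet_fintype T)

lemma cylSet_disjoint {n : ℕ} {a b : Fin n → Fin s} (h : a ≠ b) :
    Disjoint (cylSet n a) (cylSet n b) := by
  rw [Set.disjoint_left]
  intro x hxa hxb
  apply h
  funext i
  rw [← hxa i, ← hxb i]

lemma projPre_eq_biUnion (N : ℕ) (T : Set (Fin N → Fin s)) :
    projPre N T = ⋃ a ∈ (Set.toFinite T).toFinset, cylSet N a := by
  ext x
  simp only [projPre, Set.mem_setOf_eq, Set.mem_iUnion, Set.Finite.mem_toFinset]
  constructor
  · intro h
    exact ⟨fun i => x (i : ℕ), h, fun i => rfl⟩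
  · rintro ⟨a, ha, hxa⟩
    have : (fun i : Fin N => x (i : ℕ)) = a := funext fun i => hxa i
    rw [this]; exact ha

lemma nu_projPre (hν : IsBernoulli p ν) (N : ℕ) (T : Set (Fin N → Fin s)) :
    ν (projPre N T) = ∑ a ∈ (Set.toFinite T).toFinset, ν (cylSet N a) := by
  rw [projPre_eq_biUnion]
  apply measure_biUnion_finset
  · intro a ha b hb hab
    exact cylSet_disjoint hab
  · intro a _
    exact measurableSet_cylSet N a

lemma cylSet_snoc {N : ℕ} (a : Fin N → Fin s) (c : Fin s) :
    cylSet N a ∩ {x | x N = c} = cylSet (N+1) (Fin.snoc a c) := by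
  ext x
  simp only [cylSet, Set.mem_inter_iff, Set.mem_setOf_eq]
  constructor
  · rintro ⟨h1, h2⟩ k
    refine Fin.lastCases ?_ ?_ k
    · rw [Fin.snoc_last]
      simpa using h2
    · intro k'
      rw [Fin.snoc_castSucc]
      simpa using h1 k'
  · intro h
    constructor
    · intro k
      have := h k.castSucc
      rwa [Fin.snoc_castSucc] at this
    · have := h (Fin.last N)
      rwa [Fin.snoc_last] at this

lemma nu_cylSet_snoc (hν : IsBernoulli p ν) {N : ℕ} (a : Fin N → Fin s) (c : Fin s) :
    ν (cylSet (N+1) (Fin.snoc a c)) = ν (cylSet N a) * ENNReal.ofReal (p c) := by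
  rw [nu_cylSet hν, nu_cylSet hν, Fin.prod_univ_castSucc]
  congr 1
  · apply Finset.prod_congr rfl
    intro k _
    rw [Fin.snoc_castSucc]
  · rw [Fin.snoc_last]

/-- extension by one coordinate multiplies the measure -/
lemma nu_prod_step (hν : IsBernoulli p ν) (N : ℕ) (T : Set (Fin N → Fin s)) (c : Fin s) :
    ν (projPre N T ∩ {x | x N = c}) = ν (projPre N T) * ENNReal.ofReal (p c) := by
  have hdec : projPre N T ∩ {x | x N = c}
      = ⋃ a ∈ (Set.toFinite T).toFinset, cylSet (N+1) (Fin.snoc a c) := by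
    rw [projPre_eq_biUnion, Set.iUnion₂_inter]
    apply Set.iUnion₂_congr
    intro a ha
    exact cylSet_snoc a c
  rw [hdec, measure_biUnion_finset ?hd (fun a _ => measurableSet_cylSet _ _)]
  · rw [nu_projPre hν, Finset.sum_mul]
    apply Finset.sum_congr rfl
    intro a _
    exact nu_cylSet_snoc hν a c
  case hd =>
    intro a ha b hb hab
    apply cylSet_disjoint
    intro hcon
    apply hab
    funext k
    have := congrFun hcon k.castSucc
    rwa [Fin.snoc_castSucc, Fin.snoc_castSucc] at this

/-- the snoc-representation of the extended event -/
lemma projPre_inter_coord (N : ℕ) (T : Set (Fin N → Fin s)) (c : Fin s) :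
    projPre N T ∩ {x | x N = c}
      = projPre (N+1) {w | (fun i : Fin N => w i.castSucc) ∈ T ∧ w (Fin.last N) = c} := by
  ext x
  simp only [projPre, Set.mem_inter_iff, Set.mem_setOf_eq, Fin.coe_castSucc, Fin.val_last]


variable {s : ℕ} {p : Fin s → ℝ} {ν : Measure (ℕ → Fin s)}

/-- the "no jj at position N" event -/
def PB (j : Fin s) (N : ℕ) : Set (ℕ → Fin s) := {x | ¬(x N = j ∧ x (N+1) = j)}

def rr (p : Fin s → ℝ) (j : Fin s) : ℝ≥0∞ :=
  ∑ cd ∈ Finset.univ.erase ((j, j) : Fin s × Fin s),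
    ENNReal.ofReal (p cd.1) * ENNReal.ofReal (p cd.2)

lemma nu_pair_step (hν : IsBernoulli p ν) (j : Fin s) (N : ℕ) (T : Set (Fin N → Fin s)) :
    ν (projPre N T ∩ PB j N) = ν (projPre N T) * rr p j := by
  have hdec : projPre N T ∩ PB j N
      = ⋃ cd ∈ Finset.univ.erase ((j, j) : Fin s × Fin s),
          (projPre N T ∩ {x | x N = cd.1} ∩ {x | x (N+1) = cd.2}) := by
    ext x
    simp only [Set.mem_inter_iff, Set.mem_iUnion, Set.mem_setOf_eq, PB, Finset.mem_erase,
      Finset.mem_univ, and_true]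
    constructor
    · rintro ⟨hT, hpb⟩
      refine ⟨(x N, x (N+1)), ?_, ⟨hT, rfl⟩, rfl⟩
      intro hcon
      apply hpb
      rw [Prod.mk.injEq] at hcon
      exact ⟨hcon.1, hcon.2⟩
    · rintro ⟨cd, hcd, ⟨hT, h1⟩, h2⟩
      refine ⟨hT, ?_⟩
      rintro ⟨hj1, hj2⟩
      apply hcd
      have e1 : cd.1 = j := by rw [← h1, hj1]
      have e2 : cd.2 = j := by rw [← h2, hj2]
      exact Prod.ext e1 e2
  rw [hdec, measure_biUnion_finset ?hd ?hm]
  · have hterm : ∀ cd ∈ Finset.univ.erase ((j, j) : Fin s × Fin s),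
        ν (projPre N T ∩ {x | x N = cd.1} ∩ {x | x (N+1) = cd.2})
          = ν (projPre N T) * (ENNReal.ofReal (p cd.1) * ENNReal.ofReal (p cd.2)) := by
      intro cd _
      rw [projPre_inter_coord]
      rw [nu_prod_step hν (N+1) _ cd.2]
      rw [← projPre_inter_coord]
      rw [nu_prod_step hν N T cd.1, mul_assoc]
    rw [Finset.sum_congr rfl hterm, ← Finset.mul_sum]
    rfl
  case hd =>
    intro cd _ ce _ hne
    rw [Function.onFun, Set.disjoint_left]
    rintro x ⟨⟨-, h1⟩, h2⟩ ⟨⟨-, h3⟩, h4⟩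
    apply hne
    have : cd.1 = ce.1 := by rw [← h1, ← h3]
    have h5 : cd.2 = ce.2 := by rw [← h2, ← h4]
    exact Prod.ext this h5
  case hm =>
    intro cd _
    exact ((measurableSet_projPre N T).inter
      ((measurable_pi_apply N) (measurableSet_singleton _))).inter
      ((measurable_pi_apply (N+1)) (measurableSet_singleton _))

lemma rr_add (hp : (∀ k, 0 < p k) ∧ ∑ k, p k = 1) (j : Fin s) :
    rr p j + ENNReal.ofReal (p j) * ENNReal.ofReal (p j) = 1 := by
  have h1 : ∑ cd : Fin s × Fin s, ENNReal.ofReal (p cd.1) * ENNReal.ofReal (p cd.2) = 1 := by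
    rw [Fintype.sum_prod_type]
    have : ∀ c : Fin s, ∑ d : Fin s, ENNReal.ofReal (p c) * ENNReal.ofReal (p d)
        = ENNReal.ofReal (p c) * ∑ d : Fin s, ENNReal.ofReal (p d) := by
      intro c; rw [Finset.mul_sum]
    rw [Finset.sum_congr rfl (fun c _ => this c), ← Finset.sum_mul]
    have hsum : ∑ d : Fin s, ENNReal.ofReal (p d) = 1 := by
      rw [← ENNReal.ofReal_sum_of_nonneg (fun k _ => le_of_lt (hp.1 k)), hp.2]
      exact ENNReal.ofReal_one
    rw [hsum, one_mul]
  rw [← h1, rr]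
  exact Finset.sum_erase_add _ _ (Finset.mem_univ ((j,j) : Fin s × Fin s))

lemma rr_lt_one (hp : (∀ k, 0 < p k) ∧ ∑ k, p k = 1) (j : Fin s) : rr p j < 1 := by
  have hq : (0 : ℝ≥0∞) < ENNReal.ofReal (p j) * ENNReal.ofReal (p j) := by
    apply ENNReal.mul_pos <;>
      exact ne_of_gt (ENNReal.ofReal_pos.2 (hp.1 j))
  have hsum := rr_add hp j
  have hne : rr p j ≠ ⊤ := by
    intro hcon
    rw [hcon] at hsum
    simp at hsum
  calc rr p j < rr p j + ENNReal.ofReal (p j) * ENNReal.ofReal (p j) :=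
        ENNReal.lt_add_right hne (ne_of_gt hq)
    _ = 1 := hsum


variable {s : ℕ} {p : Fin s → ℝ} {ν : Measure (ℕ → Fin s)}

def BadK (j : Fin s) (n K : ℕ) : Set (ℕ → Fin s) :=
  {x | ∀ l, l < K → ¬(x (n + 2*l) = j ∧ x (n + 2*l + 1) = j)}

lemma BadK_eq_projPre (j : Fin s) (n K : ℕ) :
    BadK j n K = projPre (n + 2*K)
      {w : Fin (n + 2*K) → Fin s | ∀ l (hl : l < K),
        ¬(w ⟨n + 2*l, by omega⟩ = j ∧ w ⟨n + 2*l + 1, by omega⟩ = j)} := by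
  ext x
  simp only [BadK, projPre, Set.mem_setOf_eq]

lemma BadK_succ_subset (j : Fin s) (n K : ℕ) :
    BadK j n (K+1) ⊆ BadK j n K ∩ PB j (n + 2*K) := by
  intro x hx
  constructor
  · intro l hl; exact hx l (by omega)
  · exact hx K (by omega)

lemma nu_BadK_le (hν : IsBernoulli p ν) (j : Fin s) (n K : ℕ) :
    ν (BadK j n K) ≤ (rr p j) ^ K := by
  haveI := nu_prob hν
  induction K with
  | zero =>
      simpa using prob_le_one
  | succ K ih =>
      calc ν (BadK j n (K+1)) ≤ ν (BadK j n K ∩ PB j (n + 2*K)) :=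
            measure_mono (BadK_succ_subset j n K)
        _ = ν (BadK j n K) * rr p j := by
            rw [BadK_eq_projPre j n K, nu_pair_step hν j (n + 2*K)]
        _ ≤ (rr p j) ^ K * rr p j := by
            exact mul_le_mul_left ih _
        _ = (rr p j) ^ (K+1) := by ring

def BadFull (j : Fin s) (n : ℕ) : Set (ℕ → Fin s) :=
  {x | ∀ t, n ≤ t → ¬(x t = j ∧ x (t+1) = j)}

lemma nu_BadFull (hν : IsBernoulli p ν) (hp : (∀ k, 0 < p k) ∧ ∑ k, p k = 1)
    (j : Fin s) (n : ℕ) : ν (BadFull j n) = 0 := by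
  have hsub : ∀ K, BadFull j n ⊆ BadK j n K := by
    intro K x hx l hl
    exact hx (n + 2*l) (by omega)
  have hle : ∀ K, ν (BadFull j n) ≤ (rr p j) ^ K := fun K =>
    le_trans (measure_mono (hsub K)) (nu_BadK_le hν j n K)
  have htend : Tendsto (fun K => (rr p j) ^ K) atTop (nhds 0) :=
    ENNReal.tendsto_pow_atTop_nhds_zero_of_lt_one (rr_lt_one hp j)
  have := ge_of_tendsto' htend hle
  exact le_antisymm this zero_le

/-- the good set : jj occurs beyond every n -/
def Bset (j : Fin s) : Set (ℕ → Fin s) :=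
  {y | ∀ n, ∃ t, n ≤ t ∧ y t = j ∧ y (t+1) = j}

lemma measurableSet_Bset (j : Fin s) : MeasurableSet (Bset (s := s) j) := by
  have : Bset (s := s) j = ⋂ n, ⋃ t, ⋃ (_ : n ≤ t),
      ({x : ℕ → Fin s | x t = j} ∩ {x | x (t+1) = j}) := by
    ext x
    simp only [Bset, Set.mem_setOf_eq, Set.mem_iInter, Set.mem_iUnion, Set.mem_inter_iff]
    constructor
    · intro h n; obtain ⟨t, h1, h2, h3⟩ := h n; exact ⟨t, h1, h2, h3⟩
    · intro h n; obtain ⟨t, h1, h2, h3⟩ := h n; exact ⟨t, h1, h2, h3⟩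
  rw [this]
  apply MeasurableSet.iInter
  intro n
  apply MeasurableSet.iUnion
  intro t
  apply MeasurableSet.iUnion
  intro _
  exact ((measurable_pi_apply t) (measurableSet_singleton _)).inter
    ((measurable_pi_apply (t+1)) (measurableSet_singleton _))

lemma nu_Bset_compl (hν : IsBernoulli p ν) (hp : (∀ k, 0 < p k) ∧ ∑ k, p k = 1)
    (j : Fin s) : ν (Bset j)ᶜ = 0 := by
  have hsub : (Bset (s := s) j)ᶜ ⊆ ⋃ n, BadFull j n := by
    intro x hx
    simp only [Bset, Set.mem_compl_iff, Set.mem_setOf_eq, not_forall] at hx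
    obtain ⟨n, hn⟩ := hx
    push_neg at hn
    refine Set.mem_iUnion.2 ⟨n, ?_⟩
    intro t ht
    intro hcon
    exact (hn t ht) hcon.1 hcon.2
  apply measure_mono_null hsub
  exact measure_iUnion_null (fun n => nu_BadFull hν hp j n)





variable {s : ℕ}

/-- a maximal run of `i`s of length exactly `m`, followed by a non-`i` -/
def Rrun (i : Fin s) (m : ℕ) : Set (ℕ → Fin s) :=
  {z | (∀ l, l < m → z l = i) ∧ z m ≠ i}

/-- decision set : the run of `i`s ahead has (exact) length `2a+2` for some `a ∈ A` -/
def Dset (i : Fin s) (A : Set ℕ) : Set (ℕ → Fin s) :=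
  ⋃ a ∈ A, Rrun i (2*a + 2)

lemma mem_Dset {i : Fin s} {A : Set ℕ} {z : ℕ → Fin s} :
    z ∈ Dset i A ↔ ∃ a ∈ A, z ∈ Rrun i (2*a + 2) := by
  simp [Dset]

lemma measurableSet_Rrun (i : Fin s) (m : ℕ) : MeasurableSet (Rrun i m) := by
  have : Rrun i m = (⋂ l, ⋂ (_ : l < m), {z : ℕ → Fin s | z l = i}) ∩ {z | z m = i}ᶜ := by
    ext z
    simp [Rrun, Set.mem_iInter]
  rw [this]
  refine MeasurableSet.inter ?_ ?_
  · exact MeasurableSet.iInter fun l => MeasurableSet.iInter fun _ =>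
      (measurable_pi_apply l) (measurableSet_singleton _)
  · exact ((measurable_pi_apply m) (measurableSet_singleton _)).compl

lemma measurableSet_Dset (i : Fin s) (A : Set ℕ) : MeasurableSet (Dset i A) :=
  MeasurableSet.biUnion A.to_countable fun a _ => measurableSet_Rrun i _

lemma Rrun_unique {i : Fin s} {z : ℕ → Fin s} {m m' : ℕ}
    (h : z ∈ Rrun i m) (h' : z ∈ Rrun i m') : m = m' := by
  by_contra hne
  rcases Nat.lt_or_ge m m' with hlt | hge
  · exact h.2 (h'.1 m hlt)
  · have hlt : m' < m := by omega
    exact h'.2 (h.1 m' hlt)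

/-- membership in the decision set only depends on coordinates up to the first non-i,
in particular on coordinates `≤ T` if `z T ≠ i`. -/
lemma Dset_transfer_aux {i : Fin s} {A : Set ℕ} {z z' : ℕ → Fin s} {T : ℕ}
    (hzT : z T ≠ i) (hag : ∀ l, l ≤ T → z l = z' l) (hz : z ∈ Dset i A) : z' ∈ Dset i A := by
  obtain ⟨a, haA, hpat, hterm⟩ := mem_Dset.1 hz
  have hmT : 2*a + 2 ≤ T := by
    by_contra hcon
    push_neg at hcon
    exact hzT (hpat T (by omega))
  refine mem_Dset.2 ⟨a, haA, ?_, ?_⟩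
  · intro l hl
    rw [← hag l (by omega)]
    exact hpat l hl
  · rw [← hag _ (by omega)]
    exact hterm

lemma Dset_transfer {i : Fin s} {A : Set ℕ} {z z' : ℕ → Fin s} {T : ℕ}
    (hzT : z T ≠ i) (hag : ∀ l, l ≤ T → z l = z' l) : z ∈ Dset i A ↔ z' ∈ Dset i A := by
  constructor
  · exact Dset_transfer_aux hzT hag
  · apply Dset_transfer_aux
    · rw [← hag T le_rfl]; exact hzT
    · intro l hl; exact (hag l hl).symm

lemma swap_swap_apply (i j : Fin s) (c : Fin s) :
    Equiv.swap i j (Equiv.swap i j c) = c := Equiv.swap_apply_self i j c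

/-- MAIN forcing lemma : two consecutive `j`s in the image force a `j` in the source -/
lemma main_forced {i j : Fin s} {A : Set ℕ} {v y : ℕ → Fin s} {t : ℕ}
    (hij : i ≠ j)
    (hrel0 : y t = if tl (t+1) v ∈ Dset i A then Equiv.swap i j (v t) else v t)
    (hrel1 : y (t+1) = if tl (t+2) v ∈ Dset i A then Equiv.swap i j (v (t+1)) else v (t+1))
    (h0 : y t = j) (h1 : y (t+1) = j) : v t = j := by
  by_contra hvt
  by_cases hc0 : tl (t+1) v ∈ Dset i A
  · rw [if_pos hc0] at hrel0
    have hvti : v t = i := by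
      have : Equiv.swap i j (v t) = j := by rw [← hrel0, h0]
      have := congrArg (Equiv.swap i j) this
      rwa [swap_swap_apply, Equiv.swap_apply_right] at this
    obtain ⟨a, haA, hR⟩ := mem_Dset.1 hc0
    have hvt1 : v (t+1) = i := by
      have := hR.1 0 (by omega)
      simpa [tl] using this
    by_cases hc1 : tl (t+2) v ∈ Dset i A
    · obtain ⟨a', ha'A, hR'⟩ := mem_Dset.1 hc1
      have hshift : tl (t+2) v ∈ Rrun i (2*a + 1) := by
        constructor
        · intro l hl
          have := hR.1 (l+1) (by omega)
          simp only [tl] at this ⊢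
          rw [show t + 2 + l = t + 1 + (l + 1) by omega]
          exact this
        · have := hR.2
          simp only [tl] at this ⊢
          rw [show t + 2 + (2*a+1) = t + 1 + (2*a+2) by omega]
          exact this
      have := Rrun_unique hR' hshift
      omega
    · rw [if_neg hc1, hvt1] at hrel1
      exact hij (hrel1 ▸ h1 ▸ rfl)
  · rw [if_neg hc0] at hrel0
    exact hvt (by rw [← hrel0, h0])

/-- UNIQUENESS : below a common forced `j`, two preimages agree -/
lemma uniq_below {i j : Fin s} {A : Set ℕ} {v w y : ℕ → Fin s} {t : ℕ}
    (hij : i ≠ j)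
    (hrelv : ∀ k, k < t → y k = if tl (k+1) v ∈ Dset i A then Equiv.swap i j (v k) else v k)
    (hrelw : ∀ k, k < t → y k = if tl (k+1) w ∈ Dset i A then Equiv.swap i j (w k) else w k)
    (hvt : v t = j) (hwt : w t = j) :
    ∀ k, k ≤ t → v k = w k := by
  have key : ∀ d k, k ≤ t → t - k ≤ d → v k = w k := by
    intro d
    induction d with
    | zero =>
        intro k hk hd
        have : k = t := by omega
        rw [this, hvt, hwt]
    | succ d ih =>
        intro k hk hd
        rcases eq_or_lt_of_le hk with rfl | hkt
        · rw [hvt, hwt]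
        have hag : ∀ m, k < m → m ≤ t → v m = w m := by
          intro m h1 h2
          exact ih m h2 (by omega)
        have hceq : (tl (k+1) v ∈ Dset i A) ↔ (tl (k+1) w ∈ Dset i A) := by
          apply Dset_transfer (T := t - (k+1))
          · show v (k + 1 + (t - (k+1))) ≠ i
            rw [show k + 1 + (t - (k+1)) = t by omega, hvt]
            exact fun h => hij h.symm
          · intro l hl
            show v (k + 1 + l) = w (k + 1 + l)
            exact hag _ (by omega) (by omega)
        have h1 := hrelv k hkt
        have h2 := hrelw k hkt
        by_cases hc : tl (k+1) v ∈ Dset i A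
        · rw [if_pos hc] at h1
          rw [if_pos (hceq.1 hc)] at h2
          have : Equiv.swap i j (v k) = Equiv.swap i j (w k) := by rw [← h1, ← h2]
          exact (Equiv.swap i j).injective this
        · rw [if_neg hc] at h1
          rw [if_neg (fun h => hc (hceq.2 h))] at h2
          rw [← h1, ← h2]
  intro k hk
  exact key (t - k) k hk le_rfl


variable {s : ℕ}

/-- backward reconstruction from an anchor `t`: `reconS i j A y t d` is the reconstructed
sequence from position `t - d` onwards (junk value `j` at positions `≥ t`). -/
def reconS (i j : Fin s) (A : Set ℕ) (y : ℕ → Fin s) (t : ℕ) : ℕ → ℕ → Fin s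
  | 0 => fun _ => j
  | (d+1) => fun n =>
      match n with
      | 0 => if reconS i j A y t d ∈ Dset i A then Equiv.swap i j (y (t - (d+1)))
             else y (t - (d+1))
      | (n'+1) => reconS i j A y t d n'

def recon (i j : Fin s) (A : Set ℕ) (y : ℕ → Fin s) (t : ℕ) (k : ℕ) : Fin s :=
  if k < t then reconS i j A y t (t - k) 0 else j

variable {i j : Fin s} {A : Set ℕ}

lemma recon_high (y : ℕ → Fin s) (t : ℕ) {m : ℕ} (hm : t ≤ m) :
    recon i j A y t m = j := by
  rw [recon, if_neg (by omega)]

lemma reconS_tail (y : ℕ → Fin s) (t : ℕ) :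
    ∀ d, d ≤ t → ∀ n, reconS i j A y t d n = recon i j A y t (t - d + n) := by
  intro d
  induction d with
  | zero =>
      intro _ n
      rw [reconS, recon_high y t (by omega)]
  | succ d ih =>
      intro hd n
      match n with
      | 0 =>
          rw [recon, if_pos (by omega)]
          rw [show t - (t - (d+1) + 0) = d + 1 by omega]
      | (n'+1) =>
          have h1 : reconS i j A y t (d+1) (n'+1) = reconS i j A y t d n' := rfl
          rw [h1, ih (by omega) n']
          congr 1
          omega

/-- the reconstruction satisfies the defining recursion below the anchor -/
lemma recon_rel (y : ℕ → Fin s) (t : ℕ) {k : ℕ} (hk : k < t) :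
    recon i j A y t k
      = if tl (k+1) (recon i j A y t) ∈ Dset i A then Equiv.swap i j (y k) else y k := by
  have hd : t - k = (t - (k+1)) + 1 := by omega
  have htl : tl (k+1) (recon i j A y t) = reconS i j A y t (t - (k+1)) := by
    funext n
    simp only [tl]
    rw [reconS_tail y t (t - (k+1)) (by omega) n]
    congr 1
    omega
  rw [recon, if_pos hk, hd]
  show (if reconS i j A y t (t - (k+1)) ∈ Dset i A
      then Equiv.swap i j (y (t - ((t - (k+1)) + 1))) else y (t - ((t - (k+1)) + 1)))
    = _
  rw [htl, show t - ((t - (k+1)) + 1) = k by omega]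

/-- flipped form of the recursion : `y` in terms of `recon` -/
lemma recon_rel' (y : ℕ → Fin s) (t : ℕ) {k : ℕ} (hk : k < t) :
    y k = if tl (k+1) (recon i j A y t) ∈ Dset i A
      then Equiv.swap i j (recon i j A y t k) else recon i j A y t k := by
  by_cases hc : tl (k+1) (recon i j A y t) ∈ Dset i A
  · rw [if_pos hc, recon_rel y t hk, if_pos hc, swap_swap_apply]
  · rw [if_neg hc, recon_rel y t hk, if_neg hc]

def IsAnchor (j : Fin s) (y : ℕ → Fin s) (t : ℕ) : Prop := y t = j ∧ y (t+1) = j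

/-- at an anchor of `y`, the reconstruction from a later anchor gives value `j` -/
lemma recon_anchor_j (hij : i ≠ j) (y : ℕ → Fin s) {t t' : ℕ}
    (ht : IsAnchor j y t) (ht' : t ≤ t') : recon i j A y t' t = j := by
  rcases eq_or_lt_of_le ht' with rfl | hlt
  · exact recon_high y t le_rfl
  rcases eq_or_lt_of_le (Nat.succ_le_of_lt hlt) with heq | hlt2
  · -- t + 1 = t'
    rw [recon_rel y t' hlt]
    rw [if_neg]
    · exact ht.1
    intro hc
    obtain ⟨a, -, hR⟩ := mem_Dset.1 hc
    have := hR.1 0 (by omega)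
    simp only [tl] at this
    rw [show t + 1 + 0 = t' by omega] at this
    rw [recon_high y t' le_rfl] at this
    exact hij this.symm
  · -- t + 1 < t'
    exact main_forced hij (recon_rel' y t' (by omega)) (recon_rel' y t' (by omega)) ht.1 ht.2

/-- consistency between reconstructions from two anchors -/
lemma recon_consist (hij : i ≠ j) (y : ℕ → Fin s) {t t' : ℕ}
    (ht : IsAnchor j y t) (ht' : IsAnchor j y t') (htt' : t ≤ t') :
    ∀ k, k ≤ t → recon i j A y t k = recon i j A y t' k := by
  apply uniq_below hij (y := y) (t := t)
  · intro k hk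
    exact recon_rel' y t hk
  · intro k hk
    exact recon_rel' y t' (by omega)
  · exact recon_high y t le_rfl
  · exact recon_anchor_j hij y ht htt'


variable {s : ℕ} {i j : Fin s} {A : Set ℕ}

def anchorAfter (j : Fin s) (y : ℕ → Fin s) (k : ℕ) : ℕ :=
  if h : ∃ t, k < t ∧ IsAnchor j y t then Nat.find h else k + 1

lemma anchorAfter_spec {j : Fin s} {y : ℕ → Fin s} (hy : y ∈ Bset j) (k : ℕ) :
    k < anchorAfter j y k ∧ IsAnchor j y (anchorAfter j y k) := by
  have h : ∃ t, k < t ∧ IsAnchor j y t := by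
    obtain ⟨t, h1, h2, h3⟩ := hy (k+1)
    exact ⟨t, by omega, h2, h3⟩
  rw [anchorAfter, dif_pos h]
  exact Nat.find_spec h

def xFull (i j : Fin s) (A : Set ℕ) (y : ℕ → Fin s) : ℕ → Fin s :=
  fun k => recon i j A y (anchorAfter j y k) k

lemma xFull_eq_recon (hij : i ≠ j) {y : ℕ → Fin s} (hy : y ∈ Bset j) {t k : ℕ}
    (ht : IsAnchor j y t) (hk : k ≤ t) :
    xFull i j A y k = recon i j A y t k := by
  obtain ⟨h1, h2⟩ := anchorAfter_spec hy k
  rcases le_total (anchorAfter j y k) t with hle | hle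
  · exact recon_consist hij y h2 ht hle k (by omega)
  · exact (recon_consist hij y ht h2 hle k hk).symm

lemma xFull_anchor_j (hij : i ≠ j) {y : ℕ → Fin s} (hy : y ∈ Bset j) {t : ℕ}
    (ht : IsAnchor j y t) : xFull i j A y t = j := by
  rw [xFull_eq_recon hij hy ht le_rfl]
  exact recon_high y t le_rfl

/-- surjectivity: every `y` with infinitely many `jj`s has a preimage -/
lemma Phi_xFull (hij : i ≠ j) {y : ℕ → Fin s} (hy : y ∈ Bset j) :
    Phi i j (Dset i A) (xFull i j A y) = y := by
  funext k
  obtain ⟨t, ht1, ht2, ht3⟩ := hy (k+1)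
  have htA : IsAnchor j y t := ⟨ht2, ht3⟩
  have hkt : k < t := by omega
  have hxk : xFull i j A y k = recon i j A y t k := xFull_eq_recon hij hy htA (by omega)
  have hceq : (tl (k+1) (xFull i j A y) ∈ Dset i A)
      ↔ (tl (k+1) (recon i j A y t) ∈ Dset i A) := by
    apply Dset_transfer (T := t - (k+1))
    · show xFull i j A y (k + 1 + (t - (k+1))) ≠ i
      rw [show k + 1 + (t - (k+1)) = t by omega, xFull_anchor_j hij hy htA]
      exact fun h => hij h.symm
    · intro l hl
      show xFull i j A y (k + 1 + l) = recon i j A y t (k + 1 + l)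
      exact xFull_eq_recon hij hy htA (by omega)
  show (if tl (k+1) (xFull i j A y) ∈ Dset i A
      then Equiv.swap i j (xFull i j A y k) else xFull i j A y k) = y k
  rw [hxk]
  by_cases hc : tl (k+1) (recon i j A y t) ∈ Dset i A
  · rw [if_pos (hceq.2 hc), recon_rel' y t hkt, if_pos hc]
  · rw [if_neg (fun h => hc (hceq.1 h)), recon_rel' y t hkt, if_neg hc]

/-- injectivity on preimages of `Bset` -/
lemma Phi_injOn (hij : i ≠ j) {x x' : ℕ → Fin s}
    (heq : Phi i j (Dset i A) x = Phi i j (Dset i A) x')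
    (hB : Phi i j (Dset i A) x ∈ Bset j) : x = x' := by
  have hrelx : ∀ m, Phi i j (Dset i A) x m
      = if tl (m+1) x ∈ Dset i A then Equiv.swap i j (x m) else x m :=
    fun m => rfl
  have hrelx' : ∀ m, Phi i j (Dset i A) x m
      = if tl (m+1) x' ∈ Dset i A then Equiv.swap i j (x' m) else x' m :=
    fun m => by rw [heq]; rfl
  funext k
  obtain ⟨t, ht1, ht2, ht3⟩ := hB (k+1)
  have hxt : x t = j := main_forced hij (hrelx t) (hrelx (t+1)) ht2 ht3
  have hx't : x' t = j := main_forced hij (hrelx' t) (hrelx' (t+1)) ht2 ht3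
  exact uniq_below hij (fun m _ => hrelx m) (fun m _ => hrelx' m) hxt hx't k (by omega)





variable {s : ℕ}

variable {i j : Fin s}

/-- the word of length `2a+4` forcing the decision pattern at coordinate 0 -/
def wpt (i j : Fin s) (a : ℕ) : Fin (2*a+4) → Fin s :=
  fun l => if (l : ℕ) ≤ 2*a + 2 then i else j

/-- the explicit point -/
def xpt (i j : Fin s) (a : ℕ) : ℕ → Fin s :=
  fun l => if l ≤ 2*a + 2 then i else j

lemma xpt_mem_cyl (a : ℕ) : xpt i j a ∈ cylSet (2*a+4) (wpt i j a) := by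
  intro l
  simp [xpt, wpt]

lemma tl1_Rrun (hij : i ≠ j) {a : ℕ} {x : ℕ → Fin s} (hx : x ∈ cylSet (2*a+4) (wpt i j a)) :
    tl 1 x ∈ Rrun i (2*a+2) := by
  constructor
  · intro l hl
    have := hx ⟨1 + l, by omega⟩
    simp only [wpt] at this
    rw [if_pos (show ((⟨1 + l, by omega⟩ : Fin (2*a+4)) : ℕ) ≤ 2*a+2 by simp only [Fin.val_mk]; omega)] at this
    exact this
  · have := hx ⟨1 + (2*a+2), by omega⟩
    simp only [wpt] at this
    rw [if_neg (show ¬((⟨1 + (2*a+2), by omega⟩ : Fin (2*a+4)) : ℕ) ≤ 2*a+2 by simp only [Fin.val_mk]; omega)] at this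
    show tl 1 x (2*a+2) ≠ i
    simp only [tl]
    rw [this]
    exact fun h => hij h.symm

lemma decision_zero (hij : i ≠ j) {a : ℕ} {x : ℕ → Fin s} (hx : x ∈ cylSet (2*a+4) (wpt i j a))
    (A : Set ℕ) : (tl 1 x ∈ Dset i A) ↔ a ∈ A := by
  constructor
  · rintro hD
    obtain ⟨a', ha', hR⟩ := mem_Dset.1 hD
    have := Rrun_unique hR (tl1_Rrun hij hx)
    have haa : a' = a := by omega
    rwa [haa] at ha'
  · intro ha
    exact mem_Dset.2 ⟨a, ha, tl1_Rrun hij hx⟩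

lemma Phi_zero (hij : i ≠ j) {a : ℕ} {x : ℕ → Fin s} (hx : x ∈ cylSet (2*a+4) (wpt i j a))
    (A : Set ℕ) : Phi i j (Dset i A) x 0 = if a ∈ A then j else i := by
  have hx0 : x 0 = i := by
    have := hx ⟨0, by omega⟩
    simpa [wpt] using this
  show (if tl (0+1) x ∈ Dset i A then Equiv.swap i j (x 0) else x 0) = _
  by_cases ha : a ∈ A
  · rw [if_pos ((decision_zero hij hx A).2 ha), hx0, Equiv.swap_apply_left, if_pos ha]
  · rw [if_neg (fun h => ha ((decision_zero hij hx A).1 h)), hx0, if_neg ha]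

lemma Phi_ne_of_ne (hij : i ≠ j) {A A' : Set ℕ} {a : ℕ} (ha : ¬(a ∈ A ↔ a ∈ A'))
    {x : ℕ → Fin s} (hx : x ∈ cylSet (2*a+4) (wpt i j a)) :
    Phi i j (Dset i A) x ≠ Phi i j (Dset i A') x := by
  intro hcon
  have h0 := congrFun hcon 0
  rw [Phi_zero hij hx A, Phi_zero hij hx A'] at h0
  by_cases h1 : a ∈ A <;> by_cases h2 : a ∈ A' <;>
    simp [h1, h2] at h0 ha <;> exact hij (by tauto)



end BPAux


/-- **Proposition 3.4.3.** If `p` is a probability vector with at least two identical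
components, then the one-sided Bernoulli shift `B⁺(p)` has uncountably many automorphisms
(distinct modulo null sets). -/
theorem uncountably_many_automorphisms_of_bernoulli
    {s : ℕ} (p : Fin s → ℝ) (hp : IsProbVec p)
    (hrep : ∃ i j : Fin s, i ≠ j ∧ p i = p j)
    (ν : Measure (ℕ → Fin s)) (hν : IsBernoulli p ν) :
    ∃ S : Set ((ℕ → Fin s) → (ℕ → Fin s)),
      (¬ S.Countable) ∧
      (∀ φ ∈ S, IsIsoMod0Via ν (shiftMap (α := Fin s)) ν (shiftMap (α := Fin s)) φ) ∧
      S.Pairwise (fun φ ψ => ¬ φ =ᵐ[ν] ψ) := by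
  classical
  obtain ⟨i, j, hij, hpij⟩ := hrep
  -- the uncountable family of automorphisms
  set F : Set ℕ → ((ℕ → Fin s) → (ℕ → Fin s)) :=
    fun A => BPAux.Phi i j (BPAux.Dset i A) with hF
  refine ⟨Set.range F, ?_, ?_, ?_⟩
  · -- uncountability
    intro hc
    have hFinj : Function.Injective F := by
      intro A A' hAA
      ext a
      have h := congrFun (congrFun hAA (BPAux.xpt i j a)) 0
      simp only [hF] at h
      rw [BPAux.Phi_zero hij (BPAux.xpt_mem_cyl a) A,
        BPAux.Phi_zero hij (BPAux.xpt_mem_cyl a) A'] at h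
      by_cases h1 : a ∈ A <;> by_cases h2 : a ∈ A' <;>
        simp only [h1, h2, if_pos, if_neg, if_true, if_false] at h ⊢ <;> tauto
    have : Countable (Set ℕ) := by
      have : Countable (Set.range F) := hc.to_subtype
      exact Function.Injective.countable
        (f := fun A => (⟨F A, Set.mem_range_self A⟩ : Set.range F))
        (fun A A' h => hFinj (congrArg Subtype.val h))
    obtain ⟨f, hf⟩ := exists_injective_nat (Set ℕ)
    exact Function.cantor_injective f hf
  · -- each element is an automorphism mod 0
    rintro φ ⟨A, rfl⟩
    have hDm : MeasurableSet (BPAux.Dset i A) := BPAux.measurableSet_Dset i A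
    have hmeas : Measurable (F A) := BPAux.measurable_Phi i j hDm
    have hmap : Measure.map (F A) ν = ν := BPAux.map_Phi hν hpij hDm
    refine ⟨hmeas, hmap, (F A) ⁻¹' (BPAux.Bset j)ᶜ, (BPAux.Bset j)ᶜ,
      hmeas (BPAux.measurableSet_Bset j).compl, (BPAux.measurableSet_Bset j).compl,
      ?_, ?_, ?_, ?_⟩
    · rw [← Measure.map_apply hmeas (BPAux.measurableSet_Bset j).compl, hmap]
      exact BPAux.nu_Bset_compl hν hp j
    · exact BPAux.nu_Bset_compl hν hp j
    · have hXc : ((F A) ⁻¹' (BPAux.Bset j)ᶜ)ᶜ = (F A) ⁻¹' (BPAux.Bset j) := by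
        rw [← Set.preimage_compl, compl_compl]
      rw [hXc, compl_compl]
      refine ⟨fun x hx => hx, ?_, ?_⟩
      · intro x hx x' hx' hxx
        exact BPAux.Phi_injOn hij hxx hx
      · intro y hy
        refine ⟨BPAux.xFull i j A y, ?_, BPAux.Phi_xFull hij hy⟩
        show BPAux.Phi i j (BPAux.Dset i A) (BPAux.xFull i j A y) ∈ BPAux.Bset j
        rw [BPAux.Phi_xFull hij hy]
        exact hy
    · intro x _
      exact BPAux.Phi_shift (BPAux.Dset i A) x
  · -- pairwise non-equal mod 0
    rintro φ ⟨A, rfl⟩ ψ ⟨A', rfl⟩ hne hae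
    have hAA : A ≠ A' := fun h => hne (by rw [h])
    have hex : ∃ a, ¬(a ∈ A ↔ a ∈ A') := by
      by_contra hcon
      push_neg at hcon
      exact hAA (Set.ext fun a => hcon a)
    obtain ⟨a, ha⟩ := hex
    have hsub : BPAux.cylSet (2*a+4) (BPAux.wpt i j a) ⊆ {x | ¬ F A x = F A' x} :=
      fun x hx => BPAux.Phi_ne_of_ne hij ha hx
    have h0 : ν {x | ¬ F A x = F A' x} = 0 := by
      rw [Filter.EventuallyEq, MeasureTheory.ae_iff] at hae
      exact hae
    have hpos : ν (BPAux.cylSet (2*a+4) (BPAux.wpt i j a)) ≠ 0 := by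
      rw [BPAux.nu_cylSet hν]
      rw [Finset.prod_ne_zero_iff]
      intro k _
      exact ne_of_gt (ENNReal.ofReal_pos.2 (hp.1 _))
    exact hpos (le_antisymm (h0 ▸ measure_mono hsub) zero_le)


end
end

section
/- Suppose X = (X, 𝓑, μ, T) is a p-endomorphism and φ : X → Y is a tree-adapted factor map onto Y = (Y, 𝓒, ν, S). Then for a.e. x in X, p_X(x) = p_Y(φ(x)). -/
open MeasureTheory Filter
open scoped ENNReal symmDiff Classical

noncomputable section

section AuxAlgebra

/-- Doubly (sub)stochastic matrix fixing `p` is supported where `p j = p k`. -/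
lemma pfun_matrix_support {s : ℕ} (p : Fin s → ℝ)
    (M : Fin s → Fin s → ℝ) (hM0 : ∀ j k, 0 ≤ M j k)
    (hrow : ∀ j, ∑ k, M j k = 1) (hcol : ∀ k, ∑ j, M j k ≤ 1)
    (hfix : ∀ k, ∑ j, p j * M j k = p k) :
    ∀ j k, p j ≠ p k → M j k = 0 := by
  have key : ∑ j, ∑ k, M j k * (p j - p k) ^ 2
      = ∑ k, (p k) ^ 2 * ((∑ j, M j k) - 1) := by
    have expand : ∀ j k, M j k * (p j - p k) ^ 2
        = (p j) ^ 2 * M j k - 2 * (p k * (p j * M j k)) + (p k) ^ 2 * M j k := by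
      intro j k; ring
    simp only [expand, Finset.sum_add_distrib, Finset.sum_sub_distrib]
    have h1 : ∑ j, ∑ k, (p j) ^ 2 * M j k = ∑ k, (p k) ^ 2 := by
      simp_rw [← Finset.mul_sum, hrow, mul_one]
    have h2 : ∑ j, ∑ k, 2 * (p k * (p j * M j k)) = 2 * ∑ k, (p k) ^ 2 := by
      rw [Finset.sum_comm, Finset.mul_sum]
      refine Finset.sum_congr rfl fun k _ => ?_
      have : ∑ j, 2 * (p k * (p j * M j k)) = 2 * (p k * ∑ j, p j * M j k) := by
        rw [Finset.mul_sum, Finset.mul_sum]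
      rw [this, hfix]; ring
    have h3 : ∑ j, ∑ k, (p k) ^ 2 * M j k = ∑ k, (p k) ^ 2 * ∑ j, M j k := by
      rw [Finset.sum_comm]
      exact Finset.sum_congr rfl fun k _ => (Finset.mul_sum _ _ _).symm
    rw [h1, h2, h3]
    rw [Finset.mul_sum, ← Finset.sum_sub_distrib, ← Finset.sum_add_distrib]
    refine Finset.sum_congr rfl fun k _ => ?_
    ring
  have hle : ∑ j, ∑ k, M j k * (p j - p k) ^ 2 ≤ 0 := by
    rw [key]
    refine Finset.sum_nonpos fun k _ => mul_nonpos_of_nonneg_of_nonpos (sq_nonneg _) ?_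
    linarith [hcol k]
  have hterm : ∀ j ∈ Finset.univ (α := Fin s), ∀ k ∈ Finset.univ (α := Fin s),
      M j k * (p j - p k) ^ 2 = 0 := by
    have hz : ∑ j, ∑ k, M j k * (p j - p k) ^ 2 = 0 :=
      le_antisymm hle (Finset.sum_nonneg fun j _ => Finset.sum_nonneg fun k _ =>
        mul_nonneg (hM0 j k) (sq_nonneg _))
    intro j hj k hk
    have := (Finset.sum_eq_zero_iff_of_nonneg fun j _ => Finset.sum_nonneg fun k _ =>
      mul_nonneg (hM0 j k) (sq_nonneg _)).1 hz j hj
    exact (Finset.sum_eq_zero_iff_of_nonneg fun k _ =>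
      mul_nonneg (hM0 j k) (sq_nonneg _)).1 this k hk
  intro j k hjk
  have := hterm j (Finset.mem_univ j) k (Finset.mem_univ k)
  rcases mul_eq_zero.1 this with h | h
  · exact h
  · have h2 : p j - p k = 0 := by
      have := (pow_eq_zero_iff (two_ne_zero)).1 h
      exact this
    exact absurd (sub_eq_zero.1 h2) hjk

end AuxAlgebra

/-- **Proposition 2.1.3.** Suppose `X = (X,𝓑,μ,T)` is a `p`-endomorphism and `φ : X → Y` is a
tree-adapted factor map onto `Y = (Y,𝓒,ν,S)`.  Then for a.e. `x` in `X`,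
`p_X(x) = p_Y(φ(x))`. -/
theorem tree_adapted_factor_preserves_pFunction
    {s : ℕ} (p : Fin s → ℝ) (hp : IsProbVec p)
    {X : Type} [MeasurableSpace X] [StandardBorelSpace X]
    (μ : Measure X) [IsProbabilityMeasure μ] [NullSingletonClass μ]
    (T : X → X) (hX : IsPEndo p μ T)
    {Y : Type} [MeasurableSpace Y] [StandardBorelSpace Y]
    (ν : Measure Y) [IsProbabilityMeasure ν] [NullSingletonClass ν]
    (S : Y → Y) (hS : Measurable S) (hSm : MeasurePreserving S ν ν)
    (φ : X → Y) (hφ : IsTreeAdaptedFactor μ T ν S φ)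
    (K : TreeSystem p μ T) (L : TreeSystem p ν S) :
    ∀ᵐ x ∂μ, pFun p K x = pFun p L (φ x) := by
  obtain ⟨hφm, hφmap, hφT, hφbij⟩ := hφ
  obtain ⟨hTm, hTpres, -, -⟩ := hX
  letI := upgradeStandardBorel Y
  -- basic quasi-measure-preserving maps
  have hdecμ : ∀ A : Set X, MeasurableSet A →
      μ A = ∑ j, ENNReal.ofReal (p j) * μ ((K.inv j) ⁻¹' A) := by
    intro A hA
    conv_lhs => rw [K.decomp]
    rw [Measure.finset_sum_apply]
    exact Finset.sum_congr rfl fun j _ => by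
      rw [Measure.smul_apply, Measure.map_apply (K.measurable_inv j) hA, smul_eq_mul]
  have hdecν : ∀ A : Set Y, MeasurableSet A →
      ν A = ∑ j, ENNReal.ofReal (p j) * ν ((L.inv j) ⁻¹' A) := by
    intro A hA
    conv_lhs => rw [L.decomp]
    rw [Measure.finset_sum_apply]
    exact Finset.sum_congr rfl fun j _ => by
      rw [Measure.smul_apply, Measure.map_apply (L.measurable_inv j) hA, smul_eq_mul]
  have hACK : ∀ j, Measure.map (K.inv j) μ ≪ μ := by
    intro j
    refine Measure.AbsolutelyContinuous.mk fun A hA h0 => ?_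
    have h : μ A = ∑ i, ENNReal.ofReal (p i) * μ ((K.inv i) ⁻¹' A) := hdecμ A hA
    rw [h0] at h
    have hj := Finset.sum_eq_zero_iff.1 h.symm j (Finset.mem_univ j)
    rw [Measure.map_apply (K.measurable_inv j) hA]
    rcases mul_eq_zero.1 hj with h' | h'
    · exact absurd h' (by simp [ENNReal.ofReal_eq_zero, not_le, hp.1 j])
    · exact h'
  have qK : ∀ j, Measure.QuasiMeasurePreserving (K.inv j) μ μ :=
    fun j => ⟨K.measurable_inv j, hACK j⟩
  have qφ : Measure.QuasiMeasurePreserving φ μ ν := ⟨hφm, by rw [hφmap]⟩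
  have qT : Measure.QuasiMeasurePreserving T μ μ := hTpres.quasiMeasurePreserving
  have qS : Measure.QuasiMeasurePreserving S ν ν := hSm.quasiMeasurePreserving
  have qφj : ∀ j, Measure.QuasiMeasurePreserving (fun z => φ (K.inv j z)) μ ν :=
    fun j => qφ.comp (qK j)
  have qSφ : Measure.QuasiMeasurePreserving (fun x => S (φ x)) μ ν := qS.comp qφ
  -- the basic sets
  set E : Fin s → Fin s → Set X :=
    fun j k => {z | φ (K.inv j z) = L.inv k (φ z)} with hE
  set YS : Fin s → Set Y := fun k => {y | y = L.inv k (S y)} with hYS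
  have hEmeas : ∀ j k, MeasurableSet (E j k) := by
    intro j k
    have hfm : Measurable fun z => φ (K.inv j z) := hφm.comp (K.measurable_inv j)
    have hgm : Measurable fun z => L.inv k (φ z) := (L.measurable_inv k).comp hφm
    exact hfm.stronglyMeasurable.measurableSet_eq_fun hgm.stronglyMeasurable
  have hYSmeas : ∀ k, MeasurableSet (YS k) := by
    intro k
    have hfm : Measurable fun y : Y => y := measurable_id
    have hgm : Measurable fun y => L.inv k (S y) := (L.measurable_inv k).comp hS
    exact hfm.stronglyMeasurable.measurableSet_eq_fun hgm.stronglyMeasurable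
  -- a.e. identity S(φ(inv_j z)) = φ z
  have hSinv : ∀ j, ∀ᵐ z ∂μ, S (φ (K.inv j z)) = φ z := by
    intro j
    have h2 : ∀ᵐ z ∂μ, φ (T (K.inv j z)) = S (φ (K.inv j z)) := (qK j).ae hφT
    filter_upwards [h2, K.left_inv j] with z h2 h3
    rw [← h2, h3]
  -- the measure of YS k is p k
  have hνYS : ∀ k, ν (YS k) = ENNReal.ofReal (p k) := by
    intro k
    have h4 : ∀ i, ν ((L.inv i) ⁻¹' YS k) = if i = k then 1 else 0 := by
      intro i
      by_cases hik : i = k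
      · subst hik
        rw [if_pos rfl]
        have hall : (L.inv i) ⁻¹' YS i =ᵐ[ν] (Set.univ : Set Y) := by
          rw [Filter.eventuallyEq_univ]
          filter_upwards [L.left_inv i] with w hw
          show L.inv i w ∈ YS i
          show L.inv i w = L.inv i (S (L.inv i w))
          rw [hw]
        rw [measure_congr hall, measure_univ]
      · rw [if_neg hik]
        rw [measure_eq_zero_iff_ae_notMem]
        filter_upwards [L.left_inv i, L.inv_ne i k hik] with w h1 h2 hmem
        have : L.inv i w = L.inv k (S (L.inv i w)) := hmem
        rw [h1] at this
        exact h2 this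
    rw [hdecν (YS k) (hYSmeas k)]
    simp only [h4, mul_ite, mul_one, mul_zero]
    simp
  -- F2 : the columns are fixed by p
  have hF2 : ∀ k, ∑ j, ENNReal.ofReal (p j) * μ (E j k) = ENNReal.ofReal (p k) := by
    intro k
    have h1 : μ (φ ⁻¹' YS k) = ν (YS k) := by
      rw [← hφmap, Measure.map_apply hφm (hYSmeas k)]
    have h3 : ∀ j, μ ((K.inv j) ⁻¹' (φ ⁻¹' YS k)) = μ (E j k) := by
      intro j
      apply measure_congr
      rw [Filter.eventuallyEq_set]
      filter_upwards [hSinv j] with z hz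
      show φ (K.inv j z) = L.inv k (S (φ (K.inv j z))) ↔ φ (K.inv j z) = L.inv k (φ z)
      rw [hz]
    rw [← hνYS k, ← h1, hdecμ (φ ⁻¹' YS k) (hφm (hYSmeas k))]
    exact Finset.sum_congr rfl fun j _ => by rw [h3 j]
  -- rows sum to 1
  have hrow_cover : ∀ j, ∀ᵐ z ∂μ, ∃ k, φ (K.inv j z) = L.inv k (φ z) := by
    intro j
    have hsurj : ∀ᵐ z ∂μ, ∃ k, L.inv k (S (φ (K.inv j z))) = φ (K.inv j z) :=
      (qφj j).ae L.surj
    filter_upwards [hsurj, hSinv j] with z hk hz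
    obtain ⟨k, hk⟩ := hk
    exact ⟨k, by rw [← hk, hz]⟩
  have hrow_disj : ∀ j, ∀ k k', k ≠ k' → MeasureTheory.AEDisjoint μ (E j k) (E j k') := by
    intro j k k' hkk
    show μ (E j k ∩ E j k') = 0
    rw [measure_eq_zero_iff_ae_notMem]
    filter_upwards [qφ.ae (L.inv_ne k k' hkk)] with z hz hmem
    exact hz (hmem.1.symm.trans hmem.2)
  have hrowsum : ∀ j, ∑ k, μ (E j k) = 1 := by
    intro j
    have hd : Set.Pairwise (↑(Finset.univ : Finset (Fin s)))
        (Function.onFun (MeasureTheory.AEDisjoint μ) fun k => E j k) :=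
      fun k _ k' _ h => hrow_disj j k k' h
    have hm : ∀ k ∈ (Finset.univ : Finset (Fin s)), NullMeasurableSet (E j k) μ :=
      fun k _ => (hEmeas j k).nullMeasurableSet
    rw [← measure_biUnion_finset₀ hd hm]
    have hu : (⋃ k ∈ (Finset.univ : Finset (Fin s)), E j k) =ᵐ[μ] (Set.univ : Set X) := by
      rw [Filter.eventuallyEq_univ]
      filter_upwards [hrow_cover j] with z hz
      obtain ⟨k, hk⟩ := hz
      simp only [Set.mem_iUnion]
      exact ⟨k, Finset.mem_univ k, hk⟩
    rw [measure_congr hu, measure_univ]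
  -- columns sum to at most 1
  have hcol_disj : ∀ k, ∀ j j', j ≠ j' → MeasureTheory.AEDisjoint μ (E j k) (E j' k) := by
    intro k j j' hjj
    show μ (E j k ∩ E j' k) = 0
    rw [measure_eq_zero_iff_ae_notMem]
    filter_upwards [K.inv_ne j j' hjj, K.left_inv j, K.left_inv j', hφbij]
      with z hne h1 h2 hbij hmem
    have m1 : K.inv j z ∈ T ⁻¹' {z} := by simp [h1]
    have m2 : K.inv j' z ∈ T ⁻¹' {z} := by simp [h2]
    exact hne (hbij.injOn m1 m2 (hmem.1.trans hmem.2.symm))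
  have hcolsum : ∀ k, ∑ j, μ (E j k) ≤ 1 := by
    intro k
    have hd : Set.Pairwise (↑(Finset.univ : Finset (Fin s)))
        (Function.onFun (MeasureTheory.AEDisjoint μ) fun j => E j k) :=
      fun j _ j' _ h => hcol_disj k j j' h
    have hm : ∀ j ∈ (Finset.univ : Finset (Fin s)), NullMeasurableSet (E j k) μ :=
      fun j _ => (hEmeas j k).nullMeasurableSet
    rw [← measure_biUnion_finset₀ hd hm]
    exact prob_le_one
  -- pass to real numbers and apply the matrix lemma
  have hfin : ∀ j k, μ (E j k) ≠ ⊤ := fun j k => measure_ne_top μ _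
  set M : Fin s → Fin s → ℝ := fun j k => (μ (E j k)).toReal with hM
  have hnull : ∀ j k, p j ≠ p k → μ (E j k) = 0 := by
    have hM0 : ∀ j k, 0 ≤ M j k := fun j k => ENNReal.toReal_nonneg
    have hrowR : ∀ j, ∑ k, M j k = 1 := by
      intro j
      rw [hM, ← ENNReal.toReal_sum fun k _ => hfin j k, hrowsum j, ENNReal.toReal_one]
    have hcolR : ∀ k, ∑ j, M j k ≤ 1 := by
      intro k
      rw [hM, ← ENNReal.toReal_sum fun j _ => hfin j k]
      have := ENNReal.toReal_mono (by simp) (hcolsum k)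
      simpa using this
    have hfixR : ∀ k, ∑ j, p j * M j k = p k := by
      intro k
      have := congrArg ENNReal.toReal (hF2 k)
      rw [ENNReal.toReal_sum fun j _ =>
        ENNReal.mul_ne_top ENNReal.ofReal_ne_top (hfin j k)] at this
      rw [ENNReal.toReal_ofReal (hp.1 k).le] at this
      rw [← this]
      exact Finset.sum_congr rfl fun j _ => by
        rw [ENNReal.toReal_mul, ENNReal.toReal_ofReal (hp.1 j).le]
    intro j k hjk
    have h0 := pfun_matrix_support p M hM0 hrowR hcolR hfixR j k hjk
    rcases (ENNReal.toReal_eq_zero_iff _).1 h0 with h | h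
    · exact h
    · exact absurd h (hfin j k)
  -- collect a.e. facts and conclude
  have az2 : ∀ᵐ z ∂μ, ∀ j j', j ≠ j' → K.inv j z ≠ K.inv j' z := by
    rw [ae_all_iff]; intro j; rw [ae_all_iff]; intro j'
    by_cases hjj : j = j'
    · subst hjj; filter_upwards with z h; exact absurd rfl h
    · filter_upwards [K.inv_ne j j' hjj] with z hz _; exact hz
  have a2 : ∀ᵐ x ∂μ, ∀ j j', j ≠ j' → K.inv j (T x) ≠ K.inv j' (T x) := qT.ae az2
  have az4 : ∀ᵐ y ∂ν, ∀ i i', i ≠ i' → L.inv i y ≠ L.inv i' y := by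
    rw [ae_all_iff]; intro i; rw [ae_all_iff]; intro i'
    by_cases hii : i = i'
    · subst hii; filter_upwards with y h; exact absurd rfl h
    · filter_upwards [L.inv_ne i i' hii] with y hy _; exact hy
  have a4 : ∀ᵐ x ∂μ, ∀ i i', i ≠ i' → L.inv i (S (φ x)) ≠ L.inv i' (S (φ x)) := qSφ.ae az4
  have a5 : ∀ᵐ x ∂μ, ∀ j, ∃ k, φ (K.inv j (T x)) = L.inv k (φ (T x)) :=
    qT.ae (ae_all_iff.2 hrow_cover)
  have az6 : ∀ᵐ z ∂μ, ∀ j k, p j ≠ p k → ¬ (φ (K.inv j z) = L.inv k (φ z)) := by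
    rw [ae_all_iff]; intro j; rw [ae_all_iff]; intro k
    by_cases hjk : p j = p k
    · filter_upwards with z h; exact absurd hjk h
    · filter_upwards [measure_eq_zero_iff_ae_notMem.1 (hnull j k hjk)] with z hz _; exact hz
  have a6 : ∀ᵐ x ∂μ, ∀ j k, p j ≠ p k → ¬ (φ (K.inv j (T x)) = L.inv k (φ (T x))) := qT.ae az6
  filter_upwards [K.surj, a2, hφT, a4, a5, a6] with x h1 h2 h3 h4 h5 h6
  obtain ⟨j, hj⟩ := h1
  obtain ⟨k, hk⟩ := h5 j
  have hpjk : p j = p k := by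
    by_contra hne
    exact h6 j k hne hk
  have hφx : L.inv k (S (φ x)) = φ x := by
    rw [← h3, ← hk, hj]
  have e1 : pFun p K x = p j := by
    rw [pFun, Finset.sum_eq_single_of_mem j (Finset.mem_univ j)
      (fun i _ hij => if_neg fun hc => h2 i j hij (hc.trans hj.symm)), if_pos hj]
  have e2 : pFun p L (φ x) = p k := by
    rw [pFun, Finset.sum_eq_single_of_mem k (Finset.mem_univ k)
      (fun i _ hik => if_neg fun hc => h4 i k hik (hc.trans hφx.symm)), if_pos hφx]
  rw [e1, e2, hpjk]


end
end

section
/- If a p-endomorphism X = (X, 𝓑, μ, T) is tvwB, then X is ergodic. -/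
open MeasureTheory Filter
open scoped ENNReal symmDiff Classical

noncomputable section

/-! ### Auxiliary lemmas -/

/-- The identity tree automorphism. -/
def TreeAut.idAut {s : ℕ} (p : Fin s → ℝ) : TreeAut p where
  toFun := id
  bijective := Function.bijective_id
  length_eq := fun _ => rfl
  tail_comm := fun _ _ => rfl
  weight_eq := fun _ => rfl

instance {s : ℕ} (p : Fin s → ℝ) : Nonempty (TreeAut p) := ⟨TreeAut.idAut p⟩

lemma TreeSystem.measurable_invNode {s : ℕ} {p : Fin s → ℝ} {X : Type*} [MeasurableSpace X]
    {μ : Measure X} {T : X → X} (K : TreeSystem p μ T) (v : List (Fin s)) :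
    Measurable (K.invNode v) := by
  induction v with
  | nil => exact measurable_id
  | cons a w ih => exact (K.measurable_inv a).comp ih

lemma map_inv_ac {s : ℕ} {p : Fin s → ℝ} (hp : ∀ j, 0 < p j) {X : Type*} [MeasurableSpace X]
    {μ : Measure X} {T : X → X} (K : TreeSystem p μ T) (j : Fin s) :
    Measure.map (K.inv j) μ ≪ μ := by
  refine Measure.AbsolutelyContinuous.mk (fun S hSm hS => ?_)
  have h : μ S = ∑ k, ENNReal.ofReal (p k) * (Measure.map (K.inv k) μ) S := by
    conv_lhs => rw [K.decomp]
    simp [Measure.finset_sum_apply, Measure.smul_apply, smul_eq_mul]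
  rw [hS] at h
  have h2 := (Finset.sum_eq_zero_iff.mp h.symm) j (Finset.mem_univ j)
  rcases mul_eq_zero.mp h2 with h3 | h3
  · exact absurd h3 (by simp [ENNReal.ofReal_eq_zero, not_le, hp j])
  · exact h3

lemma map_invNode_ac {s : ℕ} {p : Fin s → ℝ} (hp : ∀ j, 0 < p j) {X : Type*}
    [MeasurableSpace X] {μ : Measure X} {T : X → X} (K : TreeSystem p μ T)
    (v : List (Fin s)) : Measure.map (K.invNode v) μ ≪ μ := by
  induction v with
  | nil =>
    have : K.invNode ([] : List (Fin s)) = id := rfl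
    rw [this, Measure.map_id]
  | cons a w ih =>
    have h1 : K.invNode (a :: w) = K.inv a ∘ K.invNode w := rfl
    rw [h1, ← Measure.map_map (K.measurable_inv a) (K.measurable_invNode w)]
    exact (ih.map (K.measurable_inv a)).trans (map_inv_ac hp K a)

lemma ae_comp_of_map_ac {X : Type*} [MeasurableSpace X] {μ : Measure X} {f : X → X}
    (hf : Measurable f) (h : Measure.map f μ ≪ μ) {P : X → Prop} (hP : ∀ᵐ y ∂μ, P y) :
    ∀ᵐ x ∂μ, P (f x) :=
  ae_of_ae_map hf.aemeasurable (hP.filter_mono h.ae_le)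

lemma ae_invNode_mem {s : ℕ} {p : Fin s → ℝ} (hp : ∀ j, 0 < p j) {X : Type*}
    [MeasurableSpace X] {μ : Measure X} {T : X → X} (K : TreeSystem p μ T)
    {A : Set X} (hA : T ⁻¹' A = A) (v : List (Fin s)) :
    ∀ᵐ x ∂μ, (K.invNode v x ∈ A ↔ x ∈ A) := by
  induction v with
  | nil => filter_upwards with x; exact Iff.rfl
  | cons a w ih =>
    have h2 : ∀ᵐ x ∂μ, T (K.inv a (K.invNode w x)) = K.invNode w x :=
      ae_comp_of_map_ac (K.measurable_invNode w) (map_invNode_ac hp K w) (K.left_inv a)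
    filter_upwards [h2, ih] with x hx hxw
    have h3 : K.invNode (a :: w) x = K.inv a (K.invNode w x) := rfl
    have h4 : K.inv a (K.invNode w x) ∈ A ↔ T (K.inv a (K.invNode w x)) ∈ A := by
      conv_lhs => rw [← hA]
      exact Iff.rfl
    rw [h3, h4, hx, hxw]

lemma tbar_const {s : ℕ} {p : Fin s → ℝ} (hp : ∑ j, p j = 1) {R : Type*}
    [PseudoMetricSpace R] {n : ℕ} (hn : n ≠ 0) {τ τ' : List (Fin s) → R} {c c' : R}
    (hτ : ∀ v, τ v = c) (hτ' : ∀ v, τ' v = c') :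
    tbar p n τ τ' = dist c c' := by
  have hw : ∀ m : ℕ, ∑ a : Fin (m + 1) → Fin s, nodeWeight p (List.ofFn a) = 1 := by
    intro m
    have h1 : ∀ a : Fin (m + 1) → Fin s,
        nodeWeight p (List.ofFn a) = ∏ i, p (a i) := by
      intro a
      simp [nodeWeight, List.map_ofFn, List.prod_ofFn, Function.comp, Fin.prod_univ_succ]
    rw [Finset.sum_congr rfl (fun a _ => h1 a)]
    have h2 := Finset.prod_univ_sum (fun _ : Fin (m + 1) => (Finset.univ : Finset (Fin s)))
      (fun _ j => p j)
    rw [← Fintype.piFinset_univ, ← h2, Finset.prod_congr rfl (fun _ _ => hp),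
      Finset.prod_const_one]
  have hAeq : (fun A : TreeAut p => (1 / (n : ℝ)) *
      ∑ m ∈ Finset.range n, ∑ a : Fin (m + 1) → Fin s,
        dist (τ (List.ofFn a)) (τ' (A.toFun (List.ofFn a))) * nodeWeight p (List.ofFn a))
      = fun _ : TreeAut p => dist c c' := by
    funext A
    have : ∀ m ∈ Finset.range n, ∑ a : Fin (m + 1) → Fin s,
        dist (τ (List.ofFn a)) (τ' (A.toFun (List.ofFn a))) * nodeWeight p (List.ofFn a)
        = dist c c' := by
      intro m _
      calc ∑ a : Fin (m + 1) → Fin s,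
          dist (τ (List.ofFn a)) (τ' (A.toFun (List.ofFn a))) * nodeWeight p (List.ofFn a)
          = ∑ a : Fin (m + 1) → Fin s, dist c c' * nodeWeight p (List.ofFn a) := by
            refine Finset.sum_congr rfl fun a _ => ?_
            rw [hτ, hτ']
        _ = dist c c' * ∑ a : Fin (m + 1) → Fin s, nodeWeight p (List.ofFn a) := by
            rw [Finset.mul_sum]
        _ = dist c c' := by rw [hw m, mul_one]
    rw [Finset.sum_congr rfl this, Finset.sum_const, Finset.card_range, nsmul_eq_mul]
    field_simp
  rw [tbar, hAeq]
  exact ciInf_const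

/-- **Proposition 2.2.1.** If a `p`-endomorphism `X = (X,𝓑,μ,T)` is tvwB, then `X` is
ergodic. -/
theorem tvwb_implies_ergodic
    {s : ℕ} (p : Fin s → ℝ) (hp : IsProbVec p)
    {X : Type} [MeasurableSpace X] [StandardBorelSpace X]
    (μ : Measure X) [IsProbabilityMeasure μ] [NullSingletonClass μ]
    (T : X → X) (hX : IsPEndo p μ T) (htvwb : TvwB p μ T) :
    Ergodic T μ := by
  obtain ⟨hTm, hTmp, ⟨K⟩, -⟩ := hX
  obtain ⟨hppos, hpsum⟩ := hp
  refine ⟨hTmp, ⟨fun A hAm hAinv => ?_⟩⟩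
  rw [Filter.eventuallyConst_set', ae_eq_empty, ae_eq_univ]
  by_contra hcon
  push_neg at hcon
  obtain ⟨h0, h1'⟩ := hcon
  have h1 : μ A ≠ 1 := fun h => h1' ((prob_compl_eq_zero_iff hAm).mpr h)
  -- basic facts about the measure of `A`
  have hA1 : μ A < 1 := lt_of_le_of_ne prob_le_one h1
  have hAfin : μ A ≠ ∞ := hA1.ne_top
  set a : ℝ := (μ A).toReal with ha
  have ha0 : 0 < a := ENNReal.toReal_pos h0 hAfin
  have ha1 : a < 1 := by
    rw [ha, ← ENNReal.toReal_one]
    exact ENNReal.toReal_strict_mono ENNReal.one_ne_top hA1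
  set ε : ℝ := min a (1 - a) / 2 with hε
  have hε0 : 0 < ε := by
    have : 0 < min a (1 - a) := lt_min ha0 (by linarith)
    positivity
  have hεa : ε < a := by
    have h := min_le_left a (1 - a)
    rw [hε]; linarith
  have hεa' : ε < 1 - a := by
    have h := min_le_right a (1 - a)
    rw [hε]; linarith
  have hε1 : ε < 1 := by linarith
  -- the observable: indicator of `A` valued in `Icc 0 1`
  set R : Type := ↥(Set.Icc (0 : ℝ) 1) with hR
  have mem1 : (1 : ℝ) ∈ Set.Icc (0 : ℝ) 1 := by constructor <;> norm_num
  have mem0 : (0 : ℝ) ∈ Set.Icc (0 : ℝ) 1 := by constructor <;> norm_num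
  set c1 : R := ⟨1, mem1⟩ with hc1
  set c0 : R := ⟨0, mem0⟩ with hc0
  set g : X → R := fun x => if x ∈ A then c1 else c0 with hg
  have hgm : Measurable g := Measurable.ite hAm measurable_const measurable_const
  -- apply tvwB
  obtain ⟨N, hN⟩ := htvwb K R g hgm ε hε0
  set n : ℕ := max N 1 with hn
  obtain ⟨G, hGm, hGμ, hGt⟩ := hN n (le_max_left _ _)
  -- the a.e. invariance of tree names
  set Z : Set X := {x | ¬ ∀ v : List (Fin s), (K.invNode v x ∈ A ↔ x ∈ A)} with hZ
  have hZ0 : μ Z = 0 := by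
    have : ∀ᵐ x ∂μ, ∀ v : List (Fin s), (K.invNode v x ∈ A ↔ x ∈ A) :=
      (ae_all_iff).mpr fun v => ae_invNode_mem hppos K hAinv v
    exact this
  -- `G` misses at most `ε` of the space
  have hGc : μ Gᶜ ≤ ENNReal.ofReal ε := by
    have h1' : μ Gᶜ = 1 - μ G := prob_compl_eq_one_sub hGm
    have h2' : (1 : ℝ≥0∞) - μ G ≤ 1 - ENNReal.ofReal (1 - ε) :=
      tsub_le_tsub_left hGμ 1
    have h3' : (1 : ℝ≥0∞) - ENNReal.ofReal (1 - ε) = ENNReal.ofReal ε := by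
      rw [← ENNReal.ofReal_one, ← ENNReal.ofReal_sub _ (by linarith)]
      norm_num
    rw [h1']
    exact h2'.trans_eq h3'
  -- both `A ∩ G ∩ Zᶜ` and `Aᶜ ∩ G ∩ Zᶜ` have positive measure
  have key : ∀ S : Set X, MeasurableSet S → ENNReal.ofReal ε < μ S →
      (S ∩ G ∩ Zᶜ).Nonempty := by
    intro S hSm hSμ
    have hsub : S ⊆ (S ∩ G ∩ Zᶜ) ∪ (Gᶜ ∪ Z) := by
      intro x hx
      by_cases hxG : x ∈ G
      · by_cases hxZ : x ∈ Z
        · exact Or.inr (Or.inr hxZ)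
        · exact Or.inl ⟨⟨hx, hxG⟩, hxZ⟩
      · exact Or.inr (Or.inl hxG)
    have h5 : μ S ≤ μ (S ∩ G ∩ Zᶜ) + μ (Gᶜ ∪ Z) :=
      le_trans (measure_mono hsub) (measure_union_le _ _)
    have h6 : μ (Gᶜ ∪ Z) ≤ ENNReal.ofReal ε :=
      le_trans (measure_union_le _ _) (by rw [hZ0, add_zero]; exact hGc)
    have h7 : μ (S ∩ G ∩ Zᶜ) ≠ 0 := by
      intro h8
      rw [h8, zero_add] at h5
      exact absurd (h5.trans h6) (not_le.mpr hSμ)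
    exact nonempty_of_measure_ne_zero h7
  have hμA : μ A = ENNReal.ofReal a := (ENNReal.ofReal_toReal hAfin).symm
  have hμAc : μ Aᶜ = ENNReal.ofReal (1 - a) := by
    rw [prob_compl_eq_one_sub hAm, hμA, ← ENNReal.ofReal_one,
      ← ENNReal.ofReal_sub _ ha0.le]
  obtain ⟨x, ⟨⟨hxA, hxG⟩, hxZ⟩⟩ := key A hAm
    (by rw [hμA]; exact ENNReal.ofReal_lt_ofReal_iff_of_nonneg hε0.le |>.mpr hεa)
  obtain ⟨y, ⟨⟨hyA, hyG⟩, hyZ⟩⟩ := key Aᶜ hAm.compl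
    (by rw [hμAc]; exact ENNReal.ofReal_lt_ofReal_iff_of_nonneg hε0.le |>.mpr hεa')
  -- compute the `tbar` distance between the two tree names: it is 1
  have hxZ' : ∀ v : List (Fin s), (K.invNode v x ∈ A ↔ x ∈ A) := not_not.mp hxZ
  have hyZ' : ∀ v : List (Fin s), (K.invNode v y ∈ A ↔ y ∈ A) := not_not.mp hyZ
  have hτx : ∀ v, K.treeName g x v = c1 := by
    intro v
    simp only [TreeSystem.treeName, hg]
    rw [if_pos ((hxZ' v).mpr hxA)]
  have hτy : ∀ v, K.treeName g y v = c0 := by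
    intro v
    simp only [TreeSystem.treeName, hg]
    rw [if_neg (fun h => hyA ((hyZ' v).mp h))]
  have hd : dist c1 c0 = 1 := by
    rw [Subtype.dist_eq]
    simp [hc1, hc0, Real.dist_eq]
  have htb : tbar p n (K.treeName g x) (K.treeName g y) = 1 := by
    rw [tbar_const hpsum (by omega : n ≠ 0) hτx hτy, hd]
  have := hGt x hxG y hyG
  rw [htb] at this
  linarith

end
end
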